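/- arXiv:2309.05215 — 3 statements merged into one kernel-verified Lean document; each statement's English description precedes it below -/
import Mathlib

section
/- At every nondegenerate u one has d_jk(u)^2 − r_j(u)^2 > 0, so P(u) := d_jk(u)^2 + h_jk^i(u)^2 − r_j(u)^2 > 0. Moreover, if (u_n) is a sequence of nondegenerate points with u_{i,n} → +∞, (u_{j,n}) and (u_{k,n}) convergent, θ_ki^j(u_n) → β ∈ (0, π) and θ_ij^k(u_n) → γ ∈ (0, π), then P(u_n) converges to a positive limit and the three sequences arccos(h_jk^i(u_n)/sqrt(P(u_n))), arccos(h_ki^j(u_n)/sqrt(P(u_n))), arccos(h_ij^k(u_n)/sqrt(P(u_n))) converge. -/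
open Real Filter Topology

/-- Edge length of a decorated edge with inversive distance `I`, base radii `ra, rb`
and conformal factors `x, y`. -/
noncomputable def elen (I ra rb x y : ℝ) : ℝ :=
  Real.sqrt ((Real.exp x * ra) ^ 2 + (Real.exp y * rb) ^ 2 +
    2 * I * (Real.exp x * ra) * (Real.exp y * rb))

/-- Inner angle of a Euclidean triangle opposite the side `lc`, adjacent to `la, lb`. -/
noncomputable def ang (la lb lc : ℝ) : ℝ :=
  Real.arccos ((la ^ 2 + lb ^ 2 - lc ^ 2) / (2 * la * lb))

/-- Signed distance of the edge center to the vertex with scaled radius `ra`. -/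
noncomputable def dCen (I ra rb l : ℝ) : ℝ := (ra ^ 2 + I * ra * rb) / l

/-- Signed height `(d_ac - d_ab * cos th) / sin th`. -/
noncomputable def hgt (dac dab th : ℝ) : ℝ := (dac - dab * Real.cos th) / Real.sin th

/-- Strict triangle inequalities for three side lengths. -/
def Nondeg (a b c : ℝ) : Prop := a < b + c ∧ b < c + a ∧ c < a + b

noncomputable def Lij (ri rj rk Iij Ijk Iki ui uj uk : ℝ) : ℝ := elen Iij ri rj ui uj
noncomputable def Ljk (ri rj rk Iij Ijk Iki ui uj uk : ℝ) : ℝ := elen Ijk rj rk uj uk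
noncomputable def Lki (ri rj rk Iij Ijk Iki ui uj uk : ℝ) : ℝ := elen Iki rk ri uk ui

/-- Inner angle `θ_jk^i` at vertex `i`. -/
noncomputable def ThI (ri rj rk Iij Ijk Iki ui uj uk : ℝ) : ℝ :=
  ang (Lij ri rj rk Iij Ijk Iki ui uj uk) (Lki ri rj rk Iij Ijk Iki ui uj uk)
    (Ljk ri rj rk Iij Ijk Iki ui uj uk)

/-- Inner angle `θ_ki^j` at vertex `j`. -/
noncomputable def ThJ (ri rj rk Iij Ijk Iki ui uj uk : ℝ) : ℝ :=
  ang (Lij ri rj rk Iij Ijk Iki ui uj uk) (Ljk ri rj rk Iij Ijk Iki ui uj uk)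
    (Lki ri rj rk Iij Ijk Iki ui uj uk)

/-- Inner angle `θ_ij^k` at vertex `k`. -/
noncomputable def ThK (ri rj rk Iij Ijk Iki ui uj uk : ℝ) : ℝ :=
  ang (Ljk ri rj rk Iij Ijk Iki ui uj uk) (Lki ri rj rk Iij Ijk Iki ui uj uk)
    (Lij ri rj rk Iij Ijk Iki ui uj uk)

noncomputable def Dij (ri rj rk Iij Ijk Iki ui uj uk : ℝ) : ℝ :=
  dCen Iij (Real.exp ui * ri) (Real.exp uj * rj) (Lij ri rj rk Iij Ijk Iki ui uj uk)
noncomputable def Dji (ri rj rk Iij Ijk Iki ui uj uk : ℝ) : ℝ :=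
  dCen Iij (Real.exp uj * rj) (Real.exp ui * ri) (Lij ri rj rk Iij Ijk Iki ui uj uk)
noncomputable def Djk (ri rj rk Iij Ijk Iki ui uj uk : ℝ) : ℝ :=
  dCen Ijk (Real.exp uj * rj) (Real.exp uk * rk) (Ljk ri rj rk Iij Ijk Iki ui uj uk)
noncomputable def Dkj (ri rj rk Iij Ijk Iki ui uj uk : ℝ) : ℝ :=
  dCen Ijk (Real.exp uk * rk) (Real.exp uj * rj) (Ljk ri rj rk Iij Ijk Iki ui uj uk)
noncomputable def Dki (ri rj rk Iij Ijk Iki ui uj uk : ℝ) : ℝ :=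
  dCen Iki (Real.exp uk * rk) (Real.exp ui * ri) (Lki ri rj rk Iij Ijk Iki ui uj uk)
noncomputable def Dik (ri rj rk Iij Ijk Iki ui uj uk : ℝ) : ℝ :=
  dCen Iki (Real.exp ui * ri) (Real.exp uk * rk) (Lki ri rj rk Iij Ijk Iki ui uj uk)

/-- The height `h_ij^k`. -/
noncomputable def Hijk (ri rj rk Iij Ijk Iki ui uj uk : ℝ) : ℝ :=
  hgt (Dik ri rj rk Iij Ijk Iki ui uj uk) (Dij ri rj rk Iij Ijk Iki ui uj uk)
    (ThI ri rj rk Iij Ijk Iki ui uj uk)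

/-- The height `h_ik^j`. -/
noncomputable def Hikj (ri rj rk Iij Ijk Iki ui uj uk : ℝ) : ℝ :=
  hgt (Dij ri rj rk Iij Ijk Iki ui uj uk) (Dik ri rj rk Iij Ijk Iki ui uj uk)
    (ThI ri rj rk Iij Ijk Iki ui uj uk)

/-- The height `h_jk^i`. -/
noncomputable def Hjki (ri rj rk Iij Ijk Iki ui uj uk : ℝ) : ℝ :=
  hgt (Dji ri rj rk Iij Ijk Iki ui uj uk) (Djk ri rj rk Iij Ijk Iki ui uj uk)
    (ThJ ri rj rk Iij Ijk Iki ui uj uk)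

/-- The height `h_ki^j`. -/
noncomputable def Hkij (ri rj rk Iij Ijk Iki ui uj uk : ℝ) : ℝ :=
  hgt (Dkj ri rj rk Iij Ijk Iki ui uj uk) (Dki ri rj rk Iij Ijk Iki ui uj uk)
    (ThK ri rj rk Iij Ijk Iki ui uj uk)

/-- The area `A_ijk = (1/2) l_ij l_jk sin θ_ki^j`. -/
noncomputable def Area (ri rj rk Iij Ijk Iki ui uj uk : ℝ) : ℝ :=
  (1 / 2) * Lij ri rj rk Iij Ijk Iki ui uj uk * Ljk ri rj rk Iij Ijk Iki ui uj uk *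
    Real.sin (ThJ ri rj rk Iij Ijk Iki ui uj uk)

/-- Nondegeneracy of the decorated triangle at `u`. -/
def NondegT (ri rj rk Iij Ijk Iki ui uj uk : ℝ) : Prop :=
  Nondeg (Lij ri rj rk Iij Ijk Iki ui uj uk) (Ljk ri rj rk Iij Ijk Iki ui uj uk)
    (Lki ri rj rk Iij Ijk Iki ui uj uk)

section Aux

lemma cos_ang (a b c : ℝ) (ha : 0 < a) (hb : 0 < b) (hc : 0 < c)
    (h1 : a < b + c) (h2 : b < c + a) (h3 : c < a + b) :
    Real.cos (ang a b c) = (a ^ 2 + b ^ 2 - c ^ 2) / (2 * a * b) := by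
  apply Real.cos_arccos
  · rw [le_div_iff₀ (by positivity)]; nlinarith
  · rw [div_le_one (by positivity)]; nlinarith

lemma cossq_lt_one (a b c : ℝ) (ha : 0 < a) (hb : 0 < b) (hc : 0 < c)
    (h1 : a < b + c) (h2 : b < c + a) (h3 : c < a + b) :
    ((a ^ 2 + b ^ 2 - c ^ 2) / (2 * a * b)) ^ 2 < 1 := by
  rw [div_pow, div_lt_one (by positivity)]
  nlinarith [mul_pos (mul_pos (show (0:ℝ) < b + c - a by linarith) (show (0:ℝ) < c + a - b by linarith))
    (mul_pos (show (0:ℝ) < a + b - c by linarith) (show (0:ℝ) < a + b + c by linarith))]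

lemma sin_ang (a b c : ℝ) :
    Real.sin (ang a b c) = Real.sqrt (1 - ((a ^ 2 + b ^ 2 - c ^ 2) / (2 * a * b)) ^ 2) := by
  rw [ang, Real.sin_arccos]

lemma sin_ang_pos (a b c : ℝ) (ha : 0 < a) (hb : 0 < b) (hc : 0 < c)
    (h1 : a < b + c) (h2 : b < c + a) (h3 : c < a + b) :
    0 < Real.sin (ang a b c) := by
  rw [sin_ang]
  exact Real.sqrt_pos.2 (by linarith [cossq_lt_one a b c ha hb hc h1 h2 h3])

lemma sin_ang_sq (a b c : ℝ) (ha : 0 < a) (hb : 0 < b) (hc : 0 < c)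
    (h1 : a < b + c) (h2 : b < c + a) (h3 : c < a + b) :
    Real.sin (ang a b c) ^ 2 = 1 - ((a ^ 2 + b ^ 2 - c ^ 2) / (2 * a * b)) ^ 2 := by
  rw [sin_ang, Real.sq_sqrt]
  linarith [cossq_lt_one a b c ha hb hc h1 h2 h3]

lemma law_sines_ic (a b c : ℝ) (ha : 0 < a) (hb : 0 < b) (hc : 0 < c) :
    (a*c) * Real.sin (ang a c b) = (a*b) * Real.sin (ang a b c) := by
  have e1 : (a*c) * Real.sin (ang a c b)
      = Real.sqrt ((a*c) ^ 2 * (1 - ((a ^ 2 + c ^ 2 - b ^ 2) / (2 * a * c)) ^ 2)) := by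
    rw [sin_ang, Real.sqrt_mul (by positivity), Real.sqrt_sq (by positivity)]
  have e2 : (a*b) * Real.sin (ang a b c)
      = Real.sqrt ((a*b) ^ 2 * (1 - ((a ^ 2 + b ^ 2 - c ^ 2) / (2 * a * b)) ^ 2)) := by
    rw [sin_ang, Real.sqrt_mul (by positivity), Real.sqrt_sq (by positivity)]
  rw [e1, e2]
  congr 1
  field_simp
  ring

lemma law_sines_kc (a b c : ℝ) (ha : 0 < a) (hb : 0 < b) (hc : 0 < c) :
    (b*c) * Real.sin (ang b c a) = (a*b) * Real.sin (ang a b c) := by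
  have e1 : (b*c) * Real.sin (ang b c a)
      = Real.sqrt ((b*c) ^ 2 * (1 - ((b ^ 2 + c ^ 2 - a ^ 2) / (2 * b * c)) ^ 2)) := by
    rw [sin_ang, Real.sqrt_mul (by positivity), Real.sqrt_sq (by positivity)]
  have e2 : (a*b) * Real.sin (ang a b c)
      = Real.sqrt ((a*b) ^ 2 * (1 - ((a ^ 2 + b ^ 2 - c ^ 2) / (2 * a * b)) ^ 2)) := by
    rw [sin_ang, Real.sqrt_mul (by positivity), Real.sqrt_sq (by positivity)]
  rw [e1, e2]
  congr 1
  field_simp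
  ring

lemma key_identity (a b c x y z : ℝ) (ha : 0 < a) (hb : 0 < b) (hc : 0 < c)
    (h1 : a < b + c) (h2 : b < c + a) (h3 : c < a + b) :
    a * hgt ((c ^ 2+x ^ 2-z ^ 2)/(2*c)) ((a ^ 2+x ^ 2-y ^ 2)/(2*a)) (ang a c b)
    + b * hgt ((a ^ 2+y ^ 2-x ^ 2)/(2*a)) ((b ^ 2+y ^ 2-z ^ 2)/(2*b)) (ang a b c)
    + c * hgt ((b ^ 2+z ^ 2-y ^ 2)/(2*b)) ((c ^ 2+z ^ 2-x ^ 2)/(2*c)) (ang b c a)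
    = a * b * Real.sin (ang a b c) := by
  obtain ⟨S, hS⟩ : ∃ S, a * b * Real.sin (ang a b c) = S := ⟨_, rfl⟩
  have hSpos : 0 < S := by
    rw [← hS]
    have := sin_ang_pos a b c ha hb hc h1 h2 h3; positivity
  have hS2' : S ^ 2 * 4 = 4*(a*b) ^ 2 - (a ^ 2+b ^ 2-c ^ 2) ^ 2 := by
    rw [← hS, mul_pow, mul_pow, sin_ang_sq a b c ha hb hc h1 h2 h3]
    field_simp
    ring
  have hsj : Real.sin (ang a b c) = S / (a*b) := by
    rw [← hS]; field_simp
  have hsi : Real.sin (ang a c b) = S / (a*c) := by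
    rw [eq_div_iff (by positivity)]
    linear_combination law_sines_ic a b c ha hb hc + hS
  have hsk : Real.sin (ang b c a) = S / (b*c) := by
    rw [eq_div_iff (by positivity)]
    linear_combination law_sines_kc a b c ha hb hc + hS
  have hqi : Real.cos (ang a c b) = (a ^ 2+c ^ 2-b ^ 2)/(2*a*c) :=
    cos_ang a c b ha hc hb (by linarith) (by linarith) (by linarith)
  have hqj : Real.cos (ang a b c) = (a ^ 2+b ^ 2-c ^ 2)/(2*a*b) :=
    cos_ang a b c ha hb hc h1 h2 h3
  have hqk : Real.cos (ang b c a) = (b ^ 2+c ^ 2-a ^ 2)/(2*b*c) :=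
    cos_ang b c a hb hc ha (by linarith) (by linarith) (by linarith)
  rw [hS, hgt, hgt, hgt, hqi, hqj, hqk, hsi, hsj, hsk]
  rw [div_div_eq_mul_div, div_div_eq_mul_div, div_div_eq_mul_div]
  have hSne : S ≠ 0 := ne_of_gt hSpos
  have e1 : a * (((c ^ 2+x ^ 2-z ^ 2)/(2*c) - (a ^ 2+x ^ 2-y ^ 2)/(2*a) * ((a ^ 2+c ^ 2-b ^ 2)/(2*a*c))) * (a*c) / S)
      = (a ^ 2*c*((c ^ 2+x ^ 2-z ^ 2)/(2*c)) - a*(a ^ 2+c ^ 2-b ^ 2)/2 * ((a ^ 2+x ^ 2-y ^ 2)/(2*a))) / S := by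
    rw [mul_div_assoc']; congr 1; field_simp
  have e2 : b * (((a ^ 2+y ^ 2-x ^ 2)/(2*a) - (b ^ 2+y ^ 2-z ^ 2)/(2*b) * ((a ^ 2+b ^ 2-c ^ 2)/(2*a*b))) * (a*b) / S)
      = (a*b ^ 2*((a ^ 2+y ^ 2-x ^ 2)/(2*a)) - b*(a ^ 2+b ^ 2-c ^ 2)/2 * ((b ^ 2+y ^ 2-z ^ 2)/(2*b))) / S := by
    rw [mul_div_assoc']; congr 1; field_simp
  have e3 : c * (((b ^ 2+z ^ 2-y ^ 2)/(2*b) - (c ^ 2+z ^ 2-x ^ 2)/(2*c) * ((b ^ 2+c ^ 2-a ^ 2)/(2*b*c))) * (b*c) / S)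
      = (b*c ^ 2*((b ^ 2+z ^ 2-y ^ 2)/(2*b)) - c*(b ^ 2+c ^ 2-a ^ 2)/2 * ((c ^ 2+z ^ 2-x ^ 2)/(2*c))) / S := by
    rw [mul_div_assoc']; congr 1; field_simp
  rw [e1, e2, e3, ← add_div, ← add_div, div_eq_iff hSne]
  have hSS : S * S = (4*(a*b) ^ 2 - (a ^ 2+b ^ 2-c ^ 2) ^ 2)/4 := by rw [← sq]; linarith
  rw [hSS]
  field_simp
  ring

lemma elen_pos (J ra rb x y : ℝ) (hJ : 0 < J) (ha : 0 < ra) (hb : 0 < rb) :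
    0 < elen J ra rb x y := by
  rw [elen]; apply Real.sqrt_pos.2; positivity

lemma elen_sq (J ra rb x y : ℝ) (hJ : 0 < J) (ha : 0 < ra) (hb : 0 < rb) :
    elen J ra rb x y ^ 2 = (Real.exp x * ra) ^ 2 + (Real.exp y * rb) ^ 2 +
      2 * J * (Real.exp x * ra) * (Real.exp y * rb) := by
  rw [elen, Real.sq_sqrt (by positivity)]

lemma dCen_eq (J X Y l : ℝ) (hl : 0 < l) (hll : l ^ 2 = X ^ 2+Y ^ 2+2*J*X*Y) :
    dCen J X Y l = (l ^ 2 + X ^ 2 - Y ^ 2)/(2*l) := by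
  rw [dCen, hll]; field_simp; ring

lemma power_pos (J Y Z l : ℝ) (hY : 0 < Y) (hZ : 0 < Z) (hJ : 1 < J) (hl : 0 < l)
    (hll : l ^ 2 = Y ^ 2+Z ^ 2+2*J*Y*Z) : 0 < (dCen J Y Z l) ^ 2 - Y ^ 2 := by
  rw [dCen, div_pow, sub_pos, lt_div_iff₀ (by positivity)]
  have h1 : 0 < J ^ 2 - 1 := by nlinarith
  nlinarith [hll, mul_pos (mul_pos (mul_pos hY hY) (mul_pos hZ hZ)) h1]

lemma l_fact (J X Y l : ℝ) (hX : 0 < X) (hl : 0 ≤ l) (hll : l ^ 2 = X ^ 2+Y ^ 2+2*J*X*Y) :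
    l = X * Real.sqrt (1 + (Y/X) ^ 2 + 2*J*(Y/X)) := by
  have h0 : l = Real.sqrt (X ^ 2+Y ^ 2+2*J*X*Y) := by rw [← hll, Real.sqrt_sq hl]
  have h1 : X ^ 2 * (1 + (Y/X) ^ 2 + 2*J*(Y/X)) = X ^ 2+Y ^ 2+2*J*X*Y := by field_simp
  rw [h0, ← h1, Real.sqrt_mul (by positivity), Real.sqrt_sq hX.le]

lemma dCen_ratio (J X Y l : ℝ) (hX : 0 < X) (hl : 0 < l)
    (hll : l ^ 2 = X ^ 2+Y ^ 2+2*J*X*Y) :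
    dCen J Y X l = Y*(Y/X + J)/Real.sqrt (1 + (Y/X) ^ 2 + 2*J*(Y/X)) := by
  have hf := l_fact J X Y l hX hl.le hll
  have hs : 0 < Real.sqrt (1 + (Y/X) ^ 2 + 2*J*(Y/X)) := by
    rcases lt_or_ge 0 (Real.sqrt (1 + (Y/X) ^ 2 + 2*J*(Y/X))) with h | h
    · exact h
    · exfalso; nlinarith [Real.sqrt_nonneg (1 + (Y/X) ^ 2 + 2*J*(Y/X))]
  rw [dCen, hf]
  field_simp

end Aux
lemma key_full (ri rj rk Iij Ijk Iki ui uj uk : ℝ) (hri : 0 < ri) (hrj : 0 < rj) (hrk : 0 < rk)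
    (hIij : 1 < Iij) (hIjk : 1 < Ijk) (hIki : 1 < Iki)
    (hN : NondegT ri rj rk Iij Ijk Iki ui uj uk) :
    Lij ri rj rk Iij Ijk Iki ui uj uk * Hijk ri rj rk Iij Ijk Iki ui uj uk
    + Ljk ri rj rk Iij Ijk Iki ui uj uk * Hjki ri rj rk Iij Ijk Iki ui uj uk
    + Lki ri rj rk Iij Ijk Iki ui uj uk * Hkij ri rj rk Iij Ijk Iki ui uj uk
    = Lij ri rj rk Iij Ijk Iki ui uj uk * Ljk ri rj rk Iij Ijk Iki ui uj uk *
        Real.sin (ThJ ri rj rk Iij Ijk Iki ui uj uk) := by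
  obtain ⟨h1, h2, h3⟩ := hN
  have ha : 0 < Lij ri rj rk Iij Ijk Iki ui uj uk :=
    elen_pos Iij ri rj ui uj (by linarith) hri hrj
  have hb : 0 < Ljk ri rj rk Iij Ijk Iki ui uj uk :=
    elen_pos Ijk rj rk uj uk (by linarith) hrj hrk
  have hc : 0 < Lki ri rj rk Iij Ijk Iki ui uj uk :=
    elen_pos Iki rk ri uk ui (by linarith) hrk hri
  have ha2 := elen_sq Iij ri rj ui uj (by linarith) hri hrj
  have hb2 := elen_sq Ijk rj rk uj uk (by linarith) hrj hrk
  have hc2 := elen_sq Iki rk ri uk ui (by linarith) hrk hri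
  simp only [Hijk, Hjki, Hkij, Dik, Dij, Dji, Djk, Dkj, Dki, ThI, ThJ, ThK]
  rw [dCen_eq Iki (Real.exp ui * ri) (Real.exp uk * rk) _ hc (by rw [Lki, hc2]; try ring),
      dCen_eq Iij (Real.exp ui * ri) (Real.exp uj * rj) _ ha (by rw [Lij, ha2]; try ring),
      dCen_eq Iij (Real.exp uj * rj) (Real.exp ui * ri) _ ha (by rw [Lij, ha2]; try ring),
      dCen_eq Ijk (Real.exp uj * rj) (Real.exp uk * rk) _ hb (by rw [Ljk, hb2]; try ring),
      dCen_eq Ijk (Real.exp uk * rk) (Real.exp uj * rj) _ hb (by rw [Ljk, hb2]; try ring),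
      dCen_eq Iki (Real.exp uk * rk) (Real.exp ui * ri) _ hc (by rw [Lki, hc2]; try ring)]
  exact key_identity _ _ _ (Real.exp ui * ri) (Real.exp uj * rj) (Real.exp uk * rk)
    ha hb hc h1 h2 h3
/-- Positivity of the power of the vertex `j` and convergence of the intersection angles. -/
theorem power_positive_and_angles_converge (ri rj rk Iij Ijk Iki : ℝ) (hri : 0 < ri) (hrj : 0 < rj) (hrk : 0 < rk)
    (hIij : 1 < Iij) (hIjk : 1 < Ijk) (hIki : 1 < Iki) :
    (∀ ui uj uk : ℝ, NondegT ri rj rk Iij Ijk Iki ui uj uk →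
      0 < Djk ri rj rk Iij Ijk Iki ui uj uk ^ 2 - (Real.exp uj * rj) ^ 2 ∧
      0 < Djk ri rj rk Iij Ijk Iki ui uj uk ^ 2 + Hjki ri rj rk Iij Ijk Iki ui uj uk ^ 2 - (Real.exp uj * rj) ^ 2) ∧
    (∀ (a b c : ℕ → ℝ) (aj ak β γ : ℝ),
      (∀ n, NondegT ri rj rk Iij Ijk Iki (a n) (b n) (c n)) →
      Tendsto a atTop atTop → Tendsto b atTop (𝓝 aj) → Tendsto c atTop (𝓝 ak) →
      β ∈ Set.Ioo (0:ℝ) π → γ ∈ Set.Ioo (0:ℝ) π →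
      Tendsto (fun n => ThJ ri rj rk Iij Ijk Iki (a n) (b n) (c n)) atTop (𝓝 β) →
      Tendsto (fun n => ThK ri rj rk Iij Ijk Iki (a n) (b n) (c n)) atTop (𝓝 γ) →
      (∃ p : ℝ, 0 < p ∧
        Tendsto (fun n => Djk ri rj rk Iij Ijk Iki (a n) (b n) (c n) ^ 2 +
          Hjki ri rj rk Iij Ijk Iki (a n) (b n) (c n) ^ 2 - (Real.exp (b n) * rj) ^ 2) atTop (𝓝 p)) ∧
      (∃ A1 : ℝ, Tendsto (fun n => Real.arccos (Hjki ri rj rk Iij Ijk Iki (a n) (b n) (c n) /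
        Real.sqrt (Djk ri rj rk Iij Ijk Iki (a n) (b n) (c n) ^ 2 + Hjki ri rj rk Iij Ijk Iki (a n) (b n) (c n) ^ 2 -
          (Real.exp (b n) * rj) ^ 2))) atTop (𝓝 A1)) ∧
      (∃ A2 : ℝ, Tendsto (fun n => Real.arccos (Hkij ri rj rk Iij Ijk Iki (a n) (b n) (c n) /
        Real.sqrt (Djk ri rj rk Iij Ijk Iki (a n) (b n) (c n) ^ 2 + Hjki ri rj rk Iij Ijk Iki (a n) (b n) (c n) ^ 2 -
          (Real.exp (b n) * rj) ^ 2))) atTop (𝓝 A2)) ∧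
      (∃ A3 : ℝ, Tendsto (fun n => Real.arccos (Hijk ri rj rk Iij Ijk Iki (a n) (b n) (c n) /
        Real.sqrt (Djk ri rj rk Iij Ijk Iki (a n) (b n) (c n) ^ 2 + Hjki ri rj rk Iij Ijk Iki (a n) (b n) (c n) ^ 2 -
          (Real.exp (b n) * rj) ^ 2))) atTop (𝓝 A3))) := by
  constructor
  · -- Part 1
    intro ui uj uk _hN
    have hy : 0 < Real.exp uj * rj := by positivity
    have hz : 0 < Real.exp uk * rk := by positivity
    have hbL : 0 < Ljk ri rj rk Iij Ijk Iki ui uj uk :=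
      elen_pos Ijk rj rk uj uk (by linarith) hrj hrk
    have h1 : 0 < Djk ri rj rk Iij Ijk Iki ui uj uk ^ 2 - (Real.exp uj * rj) ^ 2 := by
      simp only [Djk]
      exact power_pos Ijk _ _ _ hy hz hIjk hbL
        (by simpa [Ljk] using elen_sq Ijk rj rk uj uk (by linarith) hrj hrk)
    exact ⟨h1, by nlinarith [sq_nonneg (Hjki ri rj rk Iij Ijk Iki ui uj uk)]⟩
  · -- Part 2
    intro a b c aj ak β γ hN ha hb hc hβ hγ hθj hθk
    have hY : 0 < (Real.exp aj * rj) := by positivity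
    have hZ : 0 < (Real.exp ak * rk) := by positivity
    have hxpos : ∀ n, 0 < (Real.exp (a n) * ri) := fun n => by positivity
    have hx : Tendsto (fun n => (Real.exp (a n) * ri)) atTop atTop :=
      Tendsto.atTop_mul_const hri (Real.tendsto_exp_atTop.comp ha)
    have hy : Tendsto (fun n => (Real.exp (b n) * rj)) atTop (𝓝 (Real.exp aj * rj)) :=
      ((Real.continuous_exp.tendsto aj).comp hb).mul_const rj
    have hz : Tendsto (fun n => (Real.exp (c n) * rk)) atTop (𝓝 (Real.exp ak * rk)) :=
      ((Real.continuous_exp.tendsto ak).comp hc).mul_const rk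
    have hxinv : Tendsto (fun n => (Real.exp (a n) * ri)⁻¹) atTop (𝓝 0) := hx.inv_tendsto_atTop
    have hw : Tendsto (fun n => ((Real.exp (b n) * rj) / (Real.exp (a n) * ri))) atTop (𝓝 0) := by
      simp only [div_eq_mul_inv]
      simpa using hy.mul hxinv
    have hv : Tendsto (fun n => ((Real.exp (c n) * rk) / (Real.exp (a n) * ri))) atTop (𝓝 0) := by
      simp only [div_eq_mul_inv]
      simpa using hz.mul hxinv
    have hBpos : 0 < Real.sqrt ((Real.exp aj * rj) ^ 2 + (Real.exp ak * rk) ^ 2 + 2 * Ijk * (Real.exp aj * rj) * (Real.exp ak * rk)) := Real.sqrt_pos.2 (by positivity)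
    have hBsq : (Real.sqrt ((Real.exp aj * rj) ^ 2 + (Real.exp ak * rk) ^ 2 + 2 * Ijk * (Real.exp aj * rj) * (Real.exp ak * rk))) ^ 2 = (Real.exp aj * rj) ^ 2 + (Real.exp ak * rk) ^ 2 + 2 * Ijk * (Real.exp aj * rj) * (Real.exp ak * rk) :=
      Real.sq_sqrt (by positivity)
    have hLjk : Tendsto (fun n => Ljk ri rj rk Iij Ijk Iki (a n) (b n) (c n)) atTop (𝓝 (Real.sqrt ((Real.exp aj * rj) ^ 2 + (Real.exp ak * rk) ^ 2 + 2 * Ijk * (Real.exp aj * rj) * (Real.exp ak * rk)))) := by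
      simp only [Ljk, elen]
      exact (((hy.pow 2).add (hz.pow 2)).add ((tendsto_const_nhds.mul hy).mul hz)).sqrt
    have hDjk : Tendsto (fun n => Djk ri rj rk Iij Ijk Iki (a n) (b n) (c n)) atTop (𝓝 (dCen Ijk (Real.exp aj * rj) (Real.exp ak * rk) (Real.sqrt ((Real.exp aj * rj) ^ 2 + (Real.exp ak * rk) ^ 2 + 2 * Ijk * (Real.exp aj * rj) * (Real.exp ak * rk))))) := by
      simp only [Djk, dCen]
      exact ((hy.pow 2).add ((tendsto_const_nhds.mul hy).mul hz)).div hLjk hBpos.ne'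
    have hDkj : Tendsto (fun n => Dkj ri rj rk Iij Ijk Iki (a n) (b n) (c n)) atTop (𝓝 (dCen Ijk (Real.exp ak * rk) (Real.exp aj * rj) (Real.sqrt ((Real.exp aj * rj) ^ 2 + (Real.exp ak * rk) ^ 2 + 2 * Ijk * (Real.exp aj * rj) * (Real.exp ak * rk))))) := by
      simp only [Dkj, dCen]
      exact ((hz.pow 2).add ((tendsto_const_nhds.mul hz).mul hy)).div hLjk hBpos.ne'
    have hsinβ : 0 < Real.sin β := Real.sin_pos_of_pos_of_lt_pi hβ.1 hβ.2
    have hcosj : Tendsto (fun n => Real.cos (ThJ ri rj rk Iij Ijk Iki (a n) (b n) (c n))) atTop (𝓝 (Real.cos β)) :=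
      (Real.continuous_cos.tendsto β).comp hθj
    have hsinj : Tendsto (fun n => Real.sin (ThJ ri rj rk Iij Ijk Iki (a n) (b n) (c n))) atTop (𝓝 (Real.sin β)) :=
      (Real.continuous_sin.tendsto β).comp hθj
    have hcosk : Tendsto (fun n => Real.cos (ThK ri rj rk Iij Ijk Iki (a n) (b n) (c n))) atTop (𝓝 (Real.cos γ)) :=
      (Real.continuous_cos.tendsto γ).comp hθk
    have hsink : Tendsto (fun n => Real.sin (ThK ri rj rk Iij Ijk Iki (a n) (b n) (c n))) atTop (𝓝 (Real.sin γ)) :=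
      (Real.continuous_sin.tendsto γ).comp hθk
    have hsinγ : 0 < Real.sin γ := Real.sin_pos_of_pos_of_lt_pi hγ.1 hγ.2
    have hsij1 : Tendsto (fun n => Real.sqrt (1 + ((Real.exp (b n) * rj) / (Real.exp (a n) * ri)) ^ 2 + 2 * Iij * ((Real.exp (b n) * rj) / (Real.exp (a n) * ri)))) atTop (𝓝 1) := by
      have h0 : Tendsto (fun n => 1 + ((Real.exp (b n) * rj) / (Real.exp (a n) * ri)) ^ 2 + 2 * Iij * ((Real.exp (b n) * rj) / (Real.exp (a n) * ri))) atTop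
          (𝓝 (1 + (0:ℝ) ^ 2 + 2 * Iij * 0)) :=
        (tendsto_const_nhds.add (hw.pow 2)).add (tendsto_const_nhds.mul hw)
      simpa using h0.sqrt
    have hski1 : Tendsto (fun n => Real.sqrt (1 + ((Real.exp (c n) * rk) / (Real.exp (a n) * ri)) ^ 2 + 2 * Iki * ((Real.exp (c n) * rk) / (Real.exp (a n) * ri)))) atTop (𝓝 1) := by
      have h0 : Tendsto (fun n => 1 + ((Real.exp (c n) * rk) / (Real.exp (a n) * ri)) ^ 2 + 2 * Iki * ((Real.exp (c n) * rk) / (Real.exp (a n) * ri))) atTop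
          (𝓝 (1 + (0:ℝ) ^ 2 + 2 * Iki * 0)) :=
        (tendsto_const_nhds.add (hv.pow 2)).add (tendsto_const_nhds.mul hv)
      simpa using h0.sqrt
    have hLijsq : ∀ n, (Lij ri rj rk Iij Ijk Iki (a n) (b n) (c n)) ^ 2 = (Real.exp (a n) * ri) ^ 2 + (Real.exp (b n) * rj) ^ 2 + 2 * Iij * (Real.exp (a n) * ri) * (Real.exp (b n) * rj) :=
      fun n => by simpa [Lij] using elen_sq Iij ri rj (a n) (b n) (by linarith) hri hrj
    have hLkisq : ∀ n, (Lki ri rj rk Iij Ijk Iki (a n) (b n) (c n)) ^ 2 = (Real.exp (a n) * ri) ^ 2 + (Real.exp (c n) * rk) ^ 2 + 2 * Iki * (Real.exp (a n) * ri) * (Real.exp (c n) * rk) :=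
      fun n => by
        simp only [Lki]
        rw [elen_sq Iki rk ri (c n) (a n) (by linarith) hrk hri]; ring
    have hLijpos : ∀ n, 0 < Lij ri rj rk Iij Ijk Iki (a n) (b n) (c n) :=
      fun n => elen_pos Iij ri rj (a n) (b n) (by linarith) hri hrj
    have hLkipos : ∀ n, 0 < Lki ri rj rk Iij Ijk Iki (a n) (b n) (c n) :=
      fun n => elen_pos Iki rk ri (c n) (a n) (by linarith) hrk hri
    have hDji : Tendsto (fun n => Dji ri rj rk Iij Ijk Iki (a n) (b n) (c n)) atTop (𝓝 ((Real.exp aj * rj) * Iij)) := by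
      have ep : ∀ n, Dji ri rj rk Iij Ijk Iki (a n) (b n) (c n)
          = (Real.exp (b n) * rj) * (((Real.exp (b n) * rj) / (Real.exp (a n) * ri)) + Iij) / Real.sqrt (1 + ((Real.exp (b n) * rj) / (Real.exp (a n) * ri)) ^ 2 + 2 * Iij * ((Real.exp (b n) * rj) / (Real.exp (a n) * ri))) := fun n => by
        simp only [Dji]
        exact dCen_ratio Iij (Real.exp (a n) * ri) (Real.exp (b n) * rj) _ (hxpos n) (hLijpos n) (hLijsq n)
      apply Tendsto.congr (fun n => (ep n).symm)
      have hnum : Tendsto (fun n => (Real.exp (b n) * rj) * (((Real.exp (b n) * rj) / (Real.exp (a n) * ri)) + Iij)) atTop (𝓝 ((Real.exp aj * rj) * ((0:ℝ) + Iij))) :=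
        hy.mul (hw.add tendsto_const_nhds)
      have := hnum.div hsij1 one_ne_zero; simp only [zero_add, div_one] at this; exact this
    have hDki : Tendsto (fun n => Dki ri rj rk Iij Ijk Iki (a n) (b n) (c n)) atTop (𝓝 ((Real.exp ak * rk) * Iki)) := by
      have ep : ∀ n, Dki ri rj rk Iij Ijk Iki (a n) (b n) (c n)
          = (Real.exp (c n) * rk) * (((Real.exp (c n) * rk) / (Real.exp (a n) * ri)) + Iki) / Real.sqrt (1 + ((Real.exp (c n) * rk) / (Real.exp (a n) * ri)) ^ 2 + 2 * Iki * ((Real.exp (c n) * rk) / (Real.exp (a n) * ri))) := fun n => by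
        simp only [Dki]
        exact dCen_ratio Iki (Real.exp (a n) * ri) (Real.exp (c n) * rk) _ (hxpos n) (hLkipos n) (hLkisq n)
      apply Tendsto.congr (fun n => (ep n).symm)
      have hnum : Tendsto (fun n => (Real.exp (c n) * rk) * (((Real.exp (c n) * rk) / (Real.exp (a n) * ri)) + Iki)) atTop (𝓝 ((Real.exp ak * rk) * ((0:ℝ) + Iki))) :=
        hz.mul (hv.add tendsto_const_nhds)
      have := hnum.div hski1 one_ne_zero; simp only [zero_add, div_one] at this; exact this
    have hHjki : Tendsto (fun n => Hjki ri rj rk Iij Ijk Iki (a n) (b n) (c n)) atTop (𝓝 (((Real.exp aj * rj) * Iij - (dCen Ijk (Real.exp aj * rj) (Real.exp ak * rk) (Real.sqrt ((Real.exp aj * rj) ^ 2 + (Real.exp ak * rk) ^ 2 + 2 * Ijk * (Real.exp aj * rj) * (Real.exp ak * rk)))) * Real.cos β) / Real.sin β)) := by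
      simp only [Hjki, hgt]
      exact (hDji.sub (hDjk.mul hcosj)).div hsinj hsinβ.ne'
    have hHkij : Tendsto (fun n => Hkij ri rj rk Iij Ijk Iki (a n) (b n) (c n)) atTop (𝓝 (((dCen Ijk (Real.exp ak * rk) (Real.exp aj * rj) (Real.sqrt ((Real.exp aj * rj) ^ 2 + (Real.exp ak * rk) ^ 2 + 2 * Ijk * (Real.exp aj * rj) * (Real.exp ak * rk)))) - (Real.exp ak * rk) * Iki * Real.cos γ) / Real.sin γ)) := by
      simp only [Hkij, hgt]
      exact (hDkj.sub (hDki.mul hcosk)).div hsink hsinγ.ne'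
    have hDY : 0 < (dCen Ijk (Real.exp aj * rj) (Real.exp ak * rk) (Real.sqrt ((Real.exp aj * rj) ^ 2 + (Real.exp ak * rk) ^ 2 + 2 * Ijk * (Real.exp aj * rj) * (Real.exp ak * rk)))) ^ 2 - (Real.exp aj * rj) ^ 2 := power_pos Ijk (Real.exp aj * rj) (Real.exp ak * rk) (Real.sqrt ((Real.exp aj * rj) ^ 2 + (Real.exp ak * rk) ^ 2 + 2 * Ijk * (Real.exp aj * rj) * (Real.exp ak * rk))) hY hZ hIjk hBpos hBsq
    have hppos : 0 < (dCen Ijk (Real.exp aj * rj) (Real.exp ak * rk) (Real.sqrt ((Real.exp aj * rj) ^ 2 + (Real.exp ak * rk) ^ 2 + 2 * Ijk * (Real.exp aj * rj) * (Real.exp ak * rk)))) ^ 2 + ((((Real.exp aj * rj) * Iij - (dCen Ijk (Real.exp aj * rj) (Real.exp ak * rk) (Real.sqrt ((Real.exp aj * rj) ^ 2 + (Real.exp ak * rk) ^ 2 + 2 * Ijk * (Real.exp aj * rj) * (Real.exp ak * rk)))) * Real.cos β) / Real.sin β)) ^ 2 - (Real.exp aj * rj) ^ 2 := by nlinarith [sq_nonneg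 (((Real.exp aj * rj) * Iij - (dCen Ijk (Real.exp aj * rj) (Real.exp ak * rk) (Real.sqrt ((Real.exp aj * rj) ^ 2 + (Real.exp ak * rk) ^ 2 + 2 * Ijk * (Real.exp aj * rj) * (Real.exp ak * rk)))) * Real.cos β) / Real.sin β)]
    have hP : Tendsto (fun n => Djk ri rj rk Iij Ijk Iki (a n) (b n) (c n) ^ 2 + Hjki ri rj rk Iij Ijk Iki (a n) (b n) (c n) ^ 2 - (Real.exp (b n) * rj) ^ 2) atTop
        (𝓝 ((dCen Ijk (Real.exp aj * rj) (Real.exp ak * rk) (Real.sqrt ((Real.exp aj * rj) ^ 2 + (Real.exp ak * rk) ^ 2 + 2 * Ijk * (Real.exp aj * rj) * (Real.exp ak * rk)))) ^ 2 + ((((Real.exp aj * rj) * Iij - (dCen Ijk (Real.exp aj * rj) (Real.exp ak * rk) (Real.sqrt ((Real.exp aj * rj) ^ 2 + (Real.exp ak * rk) ^ 2 + 2 * Ijk * (Real.exp aj * rj) * (Real.exp ak * rk)))) * Real.cos β) / Real.sin β)) ^ 2 - (Real.exp aj * rj) ^ 2)) :=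
      ((hDjk.pow 2).add (hHjki.pow 2)).sub (hy.pow 2)
    have hsP : Tendsto (fun n => Real.sqrt (Djk ri rj rk Iij Ijk Iki (a n) (b n) (c n) ^ 2 + Hjki ri rj rk Iij Ijk Iki (a n) (b n) (c n) ^ 2 - (Real.exp (b n) * rj) ^ 2)) atTop
        (𝓝 (Real.sqrt ((dCen Ijk (Real.exp aj * rj) (Real.exp ak * rk) (Real.sqrt ((Real.exp aj * rj) ^ 2 + (Real.exp ak * rk) ^ 2 + 2 * Ijk * (Real.exp aj * rj) * (Real.exp ak * rk)))) ^ 2 + ((((Real.exp aj * rj) * Iij - (dCen Ijk (Real.exp aj * rj) (Real.exp ak * rk) (Real.sqrt ((Real.exp aj * rj) ^ 2 + (Real.exp ak * rk) ^ 2 + 2 * Ijk * (Real.exp aj * rj) * (Real.exp ak * rk)))) * Real.cos β) / Real.sin β)) ^ 2 - (Real.exp aj * rj) ^ 2))) := hP.sqrt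
    have hsPne : Real.sqrt ((dCen Ijk (Real.exp aj * rj) (Real.exp ak * rk) (Real.sqrt ((Real.exp aj * rj) ^ 2 + (Real.exp ak * rk) ^ 2 + 2 * Ijk * (Real.exp aj * rj) * (Real.exp ak * rk)))) ^ 2 + ((((Real.exp aj * rj) * Iij - (dCen Ijk (Real.exp aj * rj) (Real.exp ak * rk) (Real.sqrt ((Real.exp aj * rj) ^ 2 + (Real.exp ak * rk) ^ 2 + 2 * Ijk * (Real.exp aj * rj) * (Real.exp ak * rk)))) * Real.cos β) / Real.sin β)) ^ 2 - (Real.exp aj * rj) ^ 2) ≠ 0 :=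
      (Real.sqrt_pos.2 hppos).ne'
    have hLijTop : Tendsto (fun n => Lij ri rj rk Iij Ijk Iki (a n) (b n) (c n)) atTop atTop := by
      apply Tendsto.congr
        (fun n => (l_fact Iij (Real.exp (a n) * ri) (Real.exp (b n) * rj) (Lij ri rj rk Iij Ijk Iki (a n) (b n) (c n)) (hxpos n) (hLijpos n).le (hLijsq n)).symm)
      exact hx.atTop_mul_pos one_pos hsij1
    have hba : Tendsto (fun n => Ljk ri rj rk Iij Ijk Iki (a n) (b n) (c n) / Lij ri rj rk Iij Ijk Iki (a n) (b n) (c n)) atTop (𝓝 0) := hLjk.div_atTop hLijTop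
    have hca : Tendsto (fun n => Lki ri rj rk Iij Ijk Iki (a n) (b n) (c n) / Lij ri rj rk Iij Ijk Iki (a n) (b n) (c n)) atTop (𝓝 1) := by
      have ep : ∀ n, Lki ri rj rk Iij Ijk Iki (a n) (b n) (c n) / Lij ri rj rk Iij Ijk Iki (a n) (b n) (c n)
          = Real.sqrt (1 + ((Real.exp (c n) * rk) / (Real.exp (a n) * ri)) ^ 2 + 2 * Iki * ((Real.exp (c n) * rk) / (Real.exp (a n) * ri))) / Real.sqrt (1 + ((Real.exp (b n) * rj) / (Real.exp (a n) * ri)) ^ 2 + 2 * Iij * ((Real.exp (b n) * rj) / (Real.exp (a n) * ri))) :=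
        fun n => by
          rw [l_fact Iki (Real.exp (a n) * ri) (Real.exp (c n) * rk) (Lki ri rj rk Iij Ijk Iki (a n) (b n) (c n)) (hxpos n) (hLkipos n).le (hLkisq n),
              l_fact Iij (Real.exp (a n) * ri) (Real.exp (b n) * rj) (Lij ri rj rk Iij Ijk Iki (a n) (b n) (c n)) (hxpos n) (hLijpos n).le (hLijsq n),
              mul_div_mul_left _ _ (ne_of_gt (hxpos n))]
      apply Tendsto.congr (fun n => (ep n).symm)
      have := hski1.div hsij1 one_ne_zero; simp only [div_one] at this; exact this
    have epH : ∀ n, Hijk ri rj rk Iij Ijk Iki (a n) (b n) (c n)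
        = Ljk ri rj rk Iij Ijk Iki (a n) (b n) (c n) * Real.sin (ThJ ri rj rk Iij Ijk Iki (a n) (b n) (c n))
          - (Ljk ri rj rk Iij Ijk Iki (a n) (b n) (c n) / Lij ri rj rk Iij Ijk Iki (a n) (b n) (c n)) * Hjki ri rj rk Iij Ijk Iki (a n) (b n) (c n)
          - (Lki ri rj rk Iij Ijk Iki (a n) (b n) (c n) / Lij ri rj rk Iij Ijk Iki (a n) (b n) (c n)) * Hkij ri rj rk Iij Ijk Iki (a n) (b n) (c n) := fun n => by
      have K := key_full ri rj rk Iij Ijk Iki (a n) (b n) (c n) hri hrj hrk hIij hIjk hIki (hN n)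
      have haL := hLijpos n
      field_simp
      linear_combination K
    have hHijk : Tendsto (fun n => Hijk ri rj rk Iij Ijk Iki (a n) (b n) (c n)) atTop
        (𝓝 ((Real.sqrt ((Real.exp aj * rj) ^ 2 + (Real.exp ak * rk) ^ 2 + 2 * Ijk * (Real.exp aj * rj) * (Real.exp ak * rk))) * Real.sin β - ((((dCen Ijk (Real.exp ak * rk) (Real.exp aj * rj) (Real.sqrt ((Real.exp aj * rj) ^ 2 + (Real.exp ak * rk) ^ 2 + 2 * Ijk * (Real.exp aj * rj) * (Real.exp ak * rk)))) - (Real.exp ak * rk) * Iki * Real.cos γ) / Real.sin γ)))) := by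
      apply Tendsto.congr (fun n => (epH n).symm)
      have h0 := ((hLjk.mul hsinj).sub (hba.mul hHjki)).sub (hca.mul hHkij)
      simpa using h0
    refine ⟨⟨_, hppos, hP⟩, ?_, ?_, ?_⟩
    · exact ⟨_, (Real.continuous_arccos.tendsto _).comp (hHjki.div hsP hsPne)⟩
    · exact ⟨_, (Real.continuous_arccos.tendsto _).comp (hHkij.div hsP hsPne)⟩
    · exact ⟨_, (Real.continuous_arccos.tendsto _).comp (hHijk.div hsP hsPne)⟩
end

section
/- Assume w_n → +∞ and c_{j,n} → c_j for every j ∈ ℤ/sℤ, that every triangle T_n^j is nondegenerate (its three side lengths satisfy the strict triangle inequalities) for every n and j, and that the weighted Delaunay condition holds at every edge {v,j} for every n. Then for every j the sequences of inner angles of T_n^j at its boundary vertices j and j+1 converge, and the limits lie in (0, π). -/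
open Real Filter Topology

/-- Edge length from the center vertex `v` to the boundary vertex `j`. -/
noncomputable def lv (s : ℕ) (R : ℝ) (ρ I : ZMod s → ℝ) (w : ℝ) (c : ZMod s → ℝ)
    (j : ZMod s) : ℝ :=
  elen (I j) R (ρ j) w (c j)

/-- Edge length between consecutive boundary vertices `j` and `j+1`. -/
noncomputable def lb (s : ℕ) (ρ J : ZMod s → ℝ) (c : ZMod s → ℝ) (j : ZMod s) : ℝ :=
  elen (J j) (ρ j) (ρ (j + 1)) (c j) (c (j + 1))

/-- Inner angle of the triangle `T^j = {v, j, j+1}` at the boundary vertex `j`. -/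
noncomputable def angAtJ (s : ℕ) (R : ℝ) (ρ I J : ZMod s → ℝ) (w : ℝ)
    (c : ZMod s → ℝ) (j : ZMod s) : ℝ :=
  ang (lv s R ρ I w c j) (lb s ρ J c j) (lv s R ρ I w c (j + 1))

/-- Inner angle of the triangle `T^j = {v, j, j+1}` at the boundary vertex `j+1`. -/
noncomputable def angAtJ1 (s : ℕ) (R : ℝ) (ρ I J : ZMod s → ℝ) (w : ℝ)
    (c : ZMod s → ℝ) (j : ZMod s) : ℝ :=
  ang (lv s R ρ I w c (j + 1)) (lb s ρ J c j) (lv s R ρ I w c j)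

/-- Inner angle of the triangle `T^j = {v, j, j+1}` at the center vertex `v`. -/
noncomputable def angAtV (s : ℕ) (R : ℝ) (ρ I J : ZMod s → ℝ) (w : ℝ)
    (c : ZMod s → ℝ) (j : ZMod s) : ℝ :=
  ang (lv s R ρ I w c j) (lv s R ρ I w c (j + 1)) (lb s ρ J c j)

/-- The quantity `d(v, j)` on the edge `{v, j}`, computed from `v`. -/
noncomputable def dvj (s : ℕ) (R : ℝ) (ρ I : ZMod s → ℝ) (w : ℝ) (c : ZMod s → ℝ)
    (j : ZMod s) : ℝ :=
  dCen (I j) (Real.exp w * R) (Real.exp (c j) * ρ j) (lv s R ρ I w c j)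


section BoundaryAux

lemma edge_asymp (u a : ℕ → ℝ) (A Iv : ℝ) (l d : ℕ → ℝ)
    (hupos : ∀ n, 0 < u n) (hapos : ∀ n, 0 < a n)
    (hu : Tendsto (fun n => (u n)⁻¹) atTop (𝓝 0))
    (ha : Tendsto a atTop (𝓝 A)) (hA : 0 < A) (hI : 1 ≤ Iv)
    (hl : ∀ n, l n = Real.sqrt (u n^2 + a n^2 + 2*Iv*u n*a n))
    (hd : ∀ n, d n = (u n^2 + Iv*u n*a n)/l n) :
    (∀ n, 0 < l n) ∧
    Tendsto (fun n => l n / u n) atTop (𝓝 1) ∧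
    Tendsto (fun n => l n - u n) atTop (𝓝 (Iv*A)) ∧
    Tendsto (fun n => d n / u n) atTop (𝓝 1) ∧
    Tendsto (fun n => u n * (d n - u n)) atTop (𝓝 (A^2*(Iv^2-1)/2)) := by
  have harg : ∀ n, 0 < u n^2 + a n^2 + 2*Iv*u n*a n := by
    intro n
    nlinarith [hupos n, hapos n, mul_pos (hupos n) (hapos n), sq_nonneg (u n + a n)]
  have hlpos : ∀ n, 0 < l n := fun n => by rw [hl n]; exact Real.sqrt_pos.mpr (harg n)
  have hl2 : ∀ n, l n^2 = u n^2 + a n^2 + 2*Iv*u n*a n := fun n => by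
    rw [hl n]; exact Real.sq_sqrt (harg n).le
  have hau : Tendsto (fun n => a n * (u n)⁻¹) atTop (𝓝 0) := by
    simpa using ha.mul hu
  have hlu : Tendsto (fun n => l n / u n) atTop (𝓝 1) := by
    have hid : ∀ n, l n / u n = Real.sqrt (1 + (a n * (u n)⁻¹)^2 + 2*Iv*(a n*(u n)⁻¹)) := by
      intro n
      have h2 := (hupos n).ne'
      rw [show (1 + (a n * (u n)⁻¹)^2 + 2*Iv*(a n*(u n)⁻¹))
          = (u n^2 + a n^2 + 2*Iv*u n*a n)/(u n)^2 by field_simp,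
        Real.sqrt_div (harg n).le, Real.sqrt_sq (hupos n).le, hl n]
    rw [show (1:ℝ) = Real.sqrt (1 + 0^2 + 2*Iv*0) by norm_num]
    apply Tendsto.congr (fun n => (hid n).symm)
    exact (((tendsto_const_nhds.add (hau.pow 2)).add ((tendsto_const_nhds).mul hau))).sqrt
  have hlmu : Tendsto (fun n => l n - u n) atTop (𝓝 (Iv*A)) := by
    have hid : ∀ n, l n - u n = (a n^2*(u n)⁻¹ + 2*Iv*a n)/(l n/u n + 1) := by
      intro n
      have h1 := (hlpos n).ne'
      have h2 := (hupos n).ne'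
      have h4 : 0 < l n/u n := div_pos (hlpos n) (hupos n)
      have h3 : l n / u n + 1 ≠ 0 := by linarith
      rw [eq_div_iff h3]
      field_simp
      linear_combination hl2 n
    apply Tendsto.congr (fun n => (hid n).symm)
    have hnum : Tendsto (fun n => a n^2*(u n)⁻¹ + 2*Iv*a n) atTop (𝓝 (A^2*0 + 2*Iv*A)) :=
      ((ha.pow 2).mul hu).add ((tendsto_const_nhds).mul ha)
    have hden : Tendsto (fun n => l n/u n + 1) atTop (𝓝 (1+1)) := hlu.add tendsto_const_nhds
    have := hnum.div hden (by norm_num)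
    convert this using 2
    · rfl
    ring
  refine ⟨hlpos, hlu, hlmu, ?_, ?_⟩
  · have hid : ∀ n, d n / u n = (1 + Iv*(a n*(u n)⁻¹))/(l n/u n) := by
      intro n
      rw [hd n]
      have h1 := (hlpos n).ne'
      have h2 := (hupos n).ne'
      field_simp
    apply Tendsto.congr (fun n => (hid n).symm)
    have hnum : Tendsto (fun n => 1 + Iv*(a n*(u n)⁻¹)) atTop (𝓝 (1 + Iv*0)) :=
      tendsto_const_nhds.add (tendsto_const_nhds.mul hau)
    have := hnum.div hlu (by norm_num)
    convert this using 2
    · rfl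
    norm_num
  · have hid : ∀ n, u n * (d n - u n)
        = a n^2*(Iv^2-1)/((l n/u n)*(1 + Iv*(a n*(u n)⁻¹) + l n/u n)) := by
      intro n
      rw [hd n]
      have h1 := (hlpos n).ne'
      have h2 := (hupos n).ne'
      have h4 : 0 < l n/u n := div_pos (hlpos n) (hupos n)
      have h5 : 0 < Iv*(a n*(u n)⁻¹) :=
        mul_pos (by linarith) (mul_pos (hapos n) (inv_pos.mpr (hupos n)))
      have h3 : (l n/u n)*(1 + Iv*(a n*(u n)⁻¹) + l n/u n) ≠ 0 := by
        have : 0 < 1 + Iv*(a n*(u n)⁻¹) + l n/u n := by linarith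
        positivity
      rw [eq_div_iff h3]
      field_simp
      linear_combination (-1 : ℝ) * hl2 n
    apply Tendsto.congr (fun n => (hid n).symm)
    have hnum : Tendsto (fun n => a n^2*(Iv^2-1)) atTop (𝓝 (A^2*(Iv^2-1))) :=
      (ha.pow 2).mul_const _
    have hden : Tendsto (fun n => (l n/u n)*(1 + Iv*(a n*(u n)⁻¹) + l n/u n)) atTop
        (𝓝 (1*(1 + Iv*0 + 1))) :=
      hlu.mul ((tendsto_const_nhds.add (tendsto_const_nhds.mul hau)).add hlu)
    have := hnum.div hden (by norm_num)
    convert this using 2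
    · rfl
    norm_num

lemma cosB_limit (u lj lk lb : ℕ → ℝ) (L Dl : ℝ)
    (hupos : ∀ n, 0 < u n) (hljpos : ∀ n, 0 < lj n) (hlkpos : ∀ n, 0 < lk n)
    (hlbpos : ∀ n, 0 < lb n)
    (hinvu : Tendsto (fun n => (u n)⁻¹) atTop (𝓝 0))
    (hlj : Tendsto (fun n => lj n / u n) atTop (𝓝 1))
    (hlk : Tendsto (fun n => lk n / u n) atTop (𝓝 1))
    (hdiff : Tendsto (fun n => lj n - lk n) atTop (𝓝 Dl))
    (hlb : Tendsto lb atTop (𝓝 L)) (hL : 0 < L) :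
    Tendsto (fun n => (lj n^2 + lb n^2 - lk n^2)/(2*lj n*lb n)) atTop (𝓝 (Dl/L)) := by
  have hid : ∀ n, (lj n^2 + lb n^2 - lk n^2)/(2*lj n*lb n)
      = (lb n^2*(u n)⁻¹ + (lj n - lk n)*(lj n/u n + lk n/u n)) / (2*(lj n/u n)*lb n) := by
    intro n
    have h1 := (hljpos n).ne'
    have h2 := (hlkpos n).ne'
    have h3 := (hlbpos n).ne'
    have h4 := (hupos n).ne'
    field_simp
    ring
  apply Tendsto.congr (fun n => (hid n).symm)
  have hnum : Tendsto (fun n => lb n^2*(u n)⁻¹ + (lj n - lk n)*(lj n/u n + lk n/u n))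
      atTop (𝓝 (L^2*0 + Dl*(1+1))) :=
    ((hlb.pow 2).mul hinvu).add (hdiff.mul (hlj.add hlk))
  have hden : Tendsto (fun n => 2*(lj n/u n)*lb n) atTop (𝓝 (2*1*L)) :=
    (tendsto_const_nhds.mul hlj).mul hlb
  have := hnum.div hden (by simp; positivity)
  convert this using 2
  · rfl
  field_simp
  ring

lemma tri_main (u lj lk lb dj dk X : ℕ → ℝ) (L Dl Cj Ck : ℝ)
    (hupos : ∀ n, 0 < u n)
    (hljpos : ∀ n, 0 < lj n) (hlkpos : ∀ n, 0 < lk n) (hlbpos : ∀ n, 0 < lb n)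
    (hinvu : Tendsto (fun n => (u n)⁻¹) atTop (𝓝 0))
    (hlj : Tendsto (fun n => lj n / u n) atTop (𝓝 1))
    (hlk : Tendsto (fun n => lk n / u n) atTop (𝓝 1))
    (hdiff : Tendsto (fun n => lj n - lk n) atTop (𝓝 Dl))
    (hlb : Tendsto lb atTop (𝓝 L)) (hL : 0 < L)
    (hdj : Tendsto (fun n => dj n / u n) atTop (𝓝 1))
    (hdk : Tendsto (fun n => dk n / u n) atTop (𝓝 1))
    (hdjC : Tendsto (fun n => u n * (dj n - u n)) atTop (𝓝 (Cj/2)))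
    (hdkC : Tendsto (fun n => u n * (dk n - u n)) atTop (𝓝 (Ck/2)))
    (hX : ∀ n, X n = (lj n^2 + lk n^2 - lb n^2)/(2*lj n*lk n))
    (hXlt : ∀ n, X n^2 < 1) :
    Tendsto (fun n => u n * Real.sqrt (1 - X n^2)) atTop (𝓝 (Real.sqrt (L^2 - Dl^2))) ∧
    Tendsto (fun n => u n * (dk n - dj n * X n)) atTop (𝓝 ((Ck - Cj + L^2 - Dl^2)/2)) ∧
    Tendsto (fun n => u n * (dj n - dk n * X n)) atTop (𝓝 ((Cj - Ck + L^2 - Dl^2)/2)) := by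
  have hKey : Tendsto (fun n => u n^2 * (1 - X n^2)) atTop (𝓝 (L^2 - Dl^2)) := by
    have hid : ∀ n, u n^2 * (1 - X n^2)
        = ((lj n/u n + lk n/u n)^2 - (lb n*(u n)⁻¹)^2) * (lb n^2 - (lj n - lk n)^2)
          / (4*(lj n/u n)^2*(lk n/u n)^2) := by
      intro n
      rw [hX n]
      have h1 := (hljpos n).ne'
      have h2 := (hlkpos n).ne'
      have h4 := (hupos n).ne'
      field_simp
      ring
    apply Tendsto.congr (fun n => (hid n).symm)
    have hnum : Tendsto (fun n => ((lj n/u n + lk n/u n)^2 - (lb n*(u n)⁻¹)^2)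
        * (lb n^2 - (lj n - lk n)^2)) atTop
        (𝓝 (((1+1)^2 - (L*0)^2) * (L^2 - Dl^2))) :=
      (((hlj.add hlk).pow 2).sub ((hlb.mul hinvu).pow 2)).mul
        ((hlb.pow 2).sub (hdiff.pow 2))
    have hden : Tendsto (fun n => 4*(lj n/u n)^2*(lk n/u n)^2) atTop
        (𝓝 (4*1^2*1^2)) := (tendsto_const_nhds.mul (hlj.pow 2)).mul (hlk.pow 2)
    have := hnum.div hden (by norm_num)
    convert this using 2
    · rfl
    norm_num
  have hSq : Tendsto (fun n => u n * Real.sqrt (1 - X n^2)) atTop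
      (𝓝 (Real.sqrt (L^2 - Dl^2))) := by
    have hid : ∀ n, u n * Real.sqrt (1 - X n^2) = Real.sqrt (u n^2 * (1 - X n^2)) := by
      intro n
      rw [Real.sqrt_mul (sq_nonneg _), Real.sqrt_sq (hupos n).le]
    exact Tendsto.congr (fun n => (hid n).symm) hKey.sqrt
  have hXone : Tendsto X atTop (𝓝 1) := by
    have hid : ∀ n, X n = ((lj n/u n)^2 + (lk n/u n)^2 - (lb n*(u n)⁻¹)^2)
        / (2*(lj n/u n)*(lk n/u n)) := by
      intro n
      rw [hX n]
      have h1 := (hljpos n).ne'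
      have h2 := (hlkpos n).ne'
      have h4 := (hupos n).ne'
      field_simp
    apply Tendsto.congr (fun n => (hid n).symm)
    have hnum : Tendsto (fun n => (lj n/u n)^2 + (lk n/u n)^2 - (lb n*(u n)⁻¹)^2)
        atTop (𝓝 (1^2 + 1^2 - (L*0)^2)) :=
      ((hlj.pow 2).add (hlk.pow 2)).sub ((hlb.mul hinvu).pow 2)
    have hden : Tendsto (fun n => 2*(lj n/u n)*(lk n/u n)) atTop (𝓝 (2*1*1)) :=
      (tendsto_const_nhds.mul hlj).mul hlk
    have := hnum.div hden (by norm_num)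
    convert this using 2
    · rfl
    norm_num
  have hXup : Tendsto (fun n => u n^2 * (1 - X n)) atTop (𝓝 ((L^2 - Dl^2)/2)) := by
    have hid : ∀ n, u n^2 * (1 - X n) = u n^2*(1 - X n^2)/(1 + X n) := by
      intro n
      have h5 : -1 < X n := by nlinarith [hXlt n, sq_nonneg (X n + 1)]
      have h3 : 1 + X n ≠ 0 := by linarith
      field_simp
      ring
    apply Tendsto.congr (fun n => (hid n).symm)
    have := hKey.div (tendsto_const_nhds.add hXone) (by norm_num : (1:ℝ)+1 ≠ 0)
    convert this using 2
    · rfl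
    norm_num
  have hnumgen : ∀ (da db : ℕ → ℝ) (Ca Cb : ℝ),
      Tendsto (fun n => da n / u n) atTop (𝓝 1) →
      Tendsto (fun n => u n * (da n - u n)) atTop (𝓝 (Ca/2)) →
      Tendsto (fun n => u n * (db n - u n)) atTop (𝓝 (Cb/2)) →
      Tendsto (fun n => u n * (db n - da n * X n)) atTop (𝓝 ((Cb - Ca + L^2 - Dl^2)/2)) := by
    intro da db Ca Cb hda hdaC hdbC
    have hid : ∀ n, u n * (db n - da n * X n)
        = (u n*(db n - u n) - u n*(da n - u n)) + (da n/u n)*(u n^2*(1 - X n)) := by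
      intro n
      have h4 := (hupos n).ne'
      field_simp
      ring
    apply Tendsto.congr (fun n => (hid n).symm)
    have := (hdbC.sub hdaC).add (hda.mul hXup)
    convert this using 2
    ring
  exact ⟨hSq, hnumgen dj dk Cj Ck hdj hdjC hdkC, hnumgen dk dj Ck Cj hdk hdkC hdjC⟩

lemma cos_expr_mem {p q r : ℝ} (hp : 0 < p) (hq : 0 < q) (hr : 0 < r)
    (h1 : p < q + r) (h2 : q < p + r) (h3 : r < p + q) :
    -1 < (p^2 + q^2 - r^2)/(2*p*q) ∧ (p^2 + q^2 - r^2)/(2*p*q) < 1 := by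
  constructor
  · rw [lt_div_iff₀ (by positivity)]
    nlinarith
  · rw [div_lt_one (by positivity)]
    nlinarith

lemma my_arccos_lt_pi {x : ℝ} (h : -1 < x) : Real.arccos x < π := by
  rw [Real.arccos]
  have := Real.neg_pi_div_two_lt_arcsin.mpr h
  linarith

lemma alg_neg {Aj Ak Ij Ik Jj L : ℝ} (hAj : 0 < Aj) (hAk : 0 < Ak)
    (hIj : 1 < Ij) (hIk : 1 < Ik) (hJj : 1 < Jj) (hL : 0 < L)
    (hL2 : L^2 = Aj^2 + Ak^2 + 2*Jj*Aj*Ak)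
    (hDel : Ij*Aj - Ik*Ak = L) :
    Ak^2*(Ik^2-1) - Aj^2*(Ij^2-1) < 0 := by
  have key : Ak^2*(Ik^2-1) - Aj^2*(Ij^2-1) = -2*Ak*(Ak + Jj*Aj + Ik*L) := by
    linear_combination (-(Ij*Aj + Ik*Ak + L)) * hDel - hL2
  rw [key]
  have : 0 < Ak + Jj*Aj + Ik*L := by positivity
  nlinarith

end BoundaryAux

/-- In a star-shaped polygon, if the factor at the center diverges to `+∞`, the boundary
factors converge, all triangles are nondegenerate and all edges `{v, j}` are weighted
Delaunay, then the inner angles at the boundary vertices converge to limits in `(0, π)`. -/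


theorem boundary_angles_converge (s : ℕ) (hs : 3 ≤ s) (R : ℝ) (ρ I J : ZMod s → ℝ)
    (hR : 0 < R) (hρ : ∀ j, 0 < ρ j) (hI : ∀ j, 1 < I j) (hJ : ∀ j, 1 < J j)
    (w : ℕ → ℝ) (c : ℕ → ZMod s → ℝ) (cl : ZMod s → ℝ)
    (hw : Tendsto w atTop atTop)
    (hc : ∀ j, Tendsto (fun n => c n j) atTop (𝓝 (cl j)))
    (hnd : ∀ (n : ℕ) (j : ZMod s),
      Nondeg (lv s R ρ I (w n) (c n) j) (lb s ρ J (c n) j) (lv s R ρ I (w n) (c n) (j + 1)))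
    (hdel : ∀ (n : ℕ) (j : ZMod s),
      0 ≤ hgt (dvj s R ρ I (w n) (c n) (j - 1)) (dvj s R ρ I (w n) (c n) j)
            (angAtV s R ρ I J (w n) (c n) (j - 1)) +
          hgt (dvj s R ρ I (w n) (c n) (j + 1)) (dvj s R ρ I (w n) (c n) j)
            (angAtV s R ρ I J (w n) (c n) j)) :
    ∀ j : ZMod s,
      (∃ β ∈ Set.Ioo (0:ℝ) π,
        Tendsto (fun n => angAtJ s R ρ I J (w n) (c n) j) atTop (𝓝 β)) ∧
      (∃ γ ∈ Set.Ioo (0:ℝ) π,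
        Tendsto (fun n => angAtJ1 s R ρ I J (w n) (c n) j) atTop (𝓝 γ)) := by
  haveI : NeZero s := ⟨by omega⟩
  haveI : Nonempty (ZMod s) := ⟨0⟩
  obtain ⟨AL, hAL⟩ : ∃ f : ZMod s → ℝ, ∀ j, f j = Real.exp (cl j) * ρ j := ⟨_, fun _ => rfl⟩
  have hALpos : ∀ j, 0 < AL j := fun j => by rw [hAL]; exact mul_pos (Real.exp_pos _) (hρ j)
  obtain ⟨LL, hLL⟩ : ∃ f : ZMod s → ℝ,
      ∀ j, f j = Real.sqrt (AL j^2 + AL (j+1)^2 + 2*J j*AL j*AL (j+1)) := ⟨_, fun _ => rfl⟩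
  have hLarg : ∀ j, 0 < AL j^2 + AL (j+1)^2 + 2*J j*AL j*AL (j+1) := by
    intro j
    nlinarith [hALpos j, hALpos (j+1), mul_pos (hALpos j) (hALpos (j+1)), hJ j,
      sq_nonneg (AL j + AL (j+1))]
  have hLLpos : ∀ j, 0 < LL j := fun j => by rw [hLL]; exact Real.sqrt_pos.mpr (hLarg j)
  have hLL2 : ∀ j, LL j^2 = AL j^2 + AL (j+1)^2 + 2*J j*AL j*AL (j+1) := fun j => by
    rw [hLL]; exact Real.sq_sqrt (hLarg j).le
  obtain ⟨DL, hDL⟩ : ∃ f : ZMod s → ℝ, ∀ j, f j = I j * AL j - I (j+1) * AL (j+1) :=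
    ⟨_, fun _ => rfl⟩
  obtain ⟨CL, hCL⟩ : ∃ f : ZMod s → ℝ, ∀ j, f j = AL j^2 * (I j^2 - 1) := ⟨_, fun _ => rfl⟩
  obtain ⟨SL, hSL⟩ : ∃ f : ZMod s → ℝ, ∀ j, f j = Real.sqrt (LL j^2 - DL j^2) :=
    ⟨_, fun _ => rfl⟩
  obtain ⟨MA, hMA⟩ : ∃ f : ZMod s → ℝ,
      ∀ j, f j = (CL (j+1) - CL j + LL j^2 - DL j^2)/2 := ⟨_, fun _ => rfl⟩
  obtain ⟨MB, hMB⟩ : ∃ f : ZMod s → ℝ,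
      ∀ j, f j = (CL j - CL (j+1) + LL j^2 - DL j^2)/2 := ⟨_, fun _ => rfl⟩
  obtain ⟨Rn, hRn⟩ : ∃ f : ℕ → ℝ, ∀ n, f n = Real.exp (w n) * R := ⟨_, fun _ => rfl⟩
  have hRnpos : ∀ n, 0 < Rn n := fun n => by rw [hRn]; exact mul_pos (Real.exp_pos _) hR
  have hRninv : Tendsto (fun n => (Rn n)⁻¹) atTop (𝓝 0) := by
    have h := ((Real.tendsto_exp_atTop.comp hw).atTop_mul_const hR).inv_tendsto_atTop
    exact h.congr (fun n => by simp [hRn])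
  obtain ⟨aS, haS⟩ : ∃ f : ZMod s → ℕ → ℝ, ∀ j n, f j n = Real.exp (c n j) * ρ j :=
    ⟨_, fun _ _ => rfl⟩
  have haSpos : ∀ j n, 0 < aS j n := fun j n => by
    rw [haS]; exact mul_pos (Real.exp_pos _) (hρ j)
  have haT : ∀ j, Tendsto (aS j) atTop (𝓝 (AL j)) := by
    intro j
    rw [hAL]
    exact (((Real.continuous_exp.tendsto _).comp (hc j)).mul_const _).congr
      (fun n => (haS j n).symm)
  obtain ⟨lvS, hlvS⟩ : ∃ f : ZMod s → ℕ → ℝ, ∀ j n, f j n = lv s R ρ I (w n) (c n) j :=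
    ⟨_, fun _ _ => rfl⟩
  obtain ⟨lbS, hlbS⟩ : ∃ f : ZMod s → ℕ → ℝ, ∀ j n, f j n = lb s ρ J (c n) j :=
    ⟨_, fun _ _ => rfl⟩
  obtain ⟨dS, hdS⟩ : ∃ f : ZMod s → ℕ → ℝ, ∀ j n, f j n = dvj s R ρ I (w n) (c n) j :=
    ⟨_, fun _ _ => rfl⟩
  obtain ⟨XV, hXV⟩ : ∃ f : ZMod s → ℕ → ℝ,
      ∀ j n, f j n = (lvS j n^2 + lvS (j+1) n^2 - lbS j n^2)/(2*lvS j n*lvS (j+1) n) :=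
    ⟨_, fun _ _ => rfl⟩
  obtain ⟨SQ, hSQ⟩ : ∃ f : ZMod s → ℕ → ℝ, ∀ j n, f j n = Real.sqrt (1 - XV j n^2) :=
    ⟨_, fun _ _ => rfl⟩
  obtain ⟨NA, hNA⟩ : ∃ f : ZMod s → ℕ → ℝ, ∀ j n, f j n = dS (j+1) n - dS j n * XV j n :=
    ⟨_, fun _ _ => rfl⟩
  obtain ⟨NB, hNB⟩ : ∃ f : ZMod s → ℕ → ℝ, ∀ j n, f j n = dS j n - dS (j+1) n * XV j n :=
    ⟨_, fun _ _ => rfl⟩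
  have hlbarg : ∀ j n, 0 < (aS j n)^2 + (aS (j+1) n)^2 + 2*J j*aS j n*aS (j+1) n := by
    intro j n
    nlinarith [haSpos j n, haSpos (j+1) n, mul_pos (haSpos j n) (haSpos (j+1) n), hJ j,
      sq_nonneg (aS j n + aS (j+1) n)]
  have hlbeq : ∀ j n, lbS j n
      = Real.sqrt ((aS j n)^2 + (aS (j+1) n)^2 + 2*J j*aS j n*aS (j+1) n) := by
    intro j n
    rw [hlbS, haS, haS]
    rfl
  have hlbpos : ∀ j n, 0 < lbS j n := by
    intro j n
    rw [hlbeq]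
    exact Real.sqrt_pos.mpr (hlbarg j n)
  have hlbT : ∀ j, Tendsto (lbS j) atTop (𝓝 (LL j)) := by
    intro j
    rw [hLL]
    have h : Tendsto (fun n => (aS j n)^2 + (aS (j+1) n)^2 + 2*J j*aS j n*aS (j+1) n) atTop
        (𝓝 (AL j^2 + AL (j+1)^2 + 2*J j*AL j*AL (j+1))) :=
      (((haT j).pow 2).add ((haT (j+1)).pow 2)).add
        ((tendsto_const_nhds.mul (haT j)).mul (haT (j+1)))
    exact h.sqrt.congr (fun n => (hlbeq j n).symm)
  have hedge : ∀ j, (∀ n, 0 < lvS j n) ∧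
      Tendsto (fun n => lvS j n / Rn n) atTop (𝓝 1) ∧
      Tendsto (fun n => lvS j n - Rn n) atTop (𝓝 (I j * AL j)) ∧
      Tendsto (fun n => dS j n / Rn n) atTop (𝓝 1) ∧
      Tendsto (fun n => Rn n * (dS j n - Rn n)) atTop (𝓝 (AL j^2*(I j^2-1)/2)) :=
    fun j => edge_asymp Rn (aS j) (AL j) (I j) (lvS j) (dS j) hRnpos (haSpos j)
      hRninv (haT j) (hALpos j) (hI j).le
      (fun n => by rw [hlvS, hRn, haS]; rfl)
      (fun n => by rw [hdS, hRn, haS, hlvS]; rfl)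
  have hXVmem : ∀ j n, -1 < XV j n ∧ XV j n < 1 := by
    intro j n
    have h1 : lvS j n < lbS j n + lvS (j+1) n := by
      rw [hlvS, hlvS, hlbS]; exact (hnd n j).1
    have h2 : lbS j n < lvS (j+1) n + lvS j n := by
      rw [hlvS, hlvS, hlbS]; exact (hnd n j).2.1
    have h3 : lvS (j+1) n < lvS j n + lbS j n := by
      rw [hlvS, hlvS, hlbS]; exact (hnd n j).2.2
    rw [hXV]
    exact cos_expr_mem ((hedge j).1 n) ((hedge (j+1)).1 n) (hlbpos j n)
      (by linarith) (by linarith) (by linarith)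
  have hdiff : ∀ j, Tendsto (fun n => lvS j n - lvS (j+1) n) atTop (𝓝 (DL j)) := by
    intro j
    rw [hDL]
    have h := ((hedge j).2.2.1).sub ((hedge (j+1)).2.2.1)
    simp only [sub_sub_sub_cancel_right] at h
    exact h
  have htri : ∀ j,
      Tendsto (fun n => Rn n * SQ j n) atTop (𝓝 (SL j)) ∧
      Tendsto (fun n => Rn n * NA j n) atTop (𝓝 (MA j)) ∧
      Tendsto (fun n => Rn n * NB j n) atTop (𝓝 (MB j)) := by
    intro j
    have hXlt : ∀ n, XV j n^2 < 1 := by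
      intro n
      obtain ⟨ha, hb⟩ := hXVmem j n
      nlinarith
    have hdjC : Tendsto (fun n => Rn n * (dS j n - Rn n)) atTop (𝓝 (CL j/2)) := by
      rw [hCL]; exact (hedge j).2.2.2.2
    have hdkC : Tendsto (fun n => Rn n * (dS (j+1) n - Rn n)) atTop (𝓝 (CL (j+1)/2)) := by
      rw [hCL]; exact (hedge (j+1)).2.2.2.2
    obtain ⟨hS, hA, hB⟩ := tri_main Rn (lvS j) (lvS (j+1)) (lbS j) (dS j) (dS (j+1)) (XV j)
      (LL j) (DL j) (CL j) (CL (j+1)) hRnpos ((hedge j).1) ((hedge (j+1)).1) (hlbpos j)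
      hRninv ((hedge j).2.1) ((hedge (j+1)).2.1) (hdiff j) (hlbT j) (hLLpos j)
      ((hedge j).2.2.2.1) ((hedge (j+1)).2.2.2.1) hdjC hdkC (hXV j) hXlt
    refine ⟨?_, ?_, ?_⟩
    · rw [hSL]
      exact hS.congr (fun n => by rw [hSQ])
    · rw [hMA]
      exact hA.congr (fun n => by rw [hNA])
    · rw [hMB]
      exact hB.congr (fun n => by rw [hNB])
  have hcosJ : ∀ j, Tendsto
      (fun n => (lvS j n^2 + lbS j n^2 - lvS (j+1) n^2)/(2*lvS j n*lbS j n))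
      atTop (𝓝 (DL j / LL j)) := fun j =>
    cosB_limit Rn (lvS j) (lvS (j+1)) (lbS j) (LL j) (DL j) hRnpos ((hedge j).1)
      ((hedge (j+1)).1) (hlbpos j) hRninv ((hedge j).2.1) ((hedge (j+1)).2.1) (hdiff j)
      (hlbT j) (hLLpos j)
  have hcosJ1 : ∀ j, Tendsto
      (fun n => (lvS (j+1) n^2 + lbS j n^2 - lvS j n^2)/(2*lvS (j+1) n*lbS j n))
      atTop (𝓝 (-DL j / LL j)) := by
    intro j
    have hd' : Tendsto (fun n => lvS (j+1) n - lvS j n) atTop (𝓝 (-DL j)) := by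
      simpa [neg_sub] using (hdiff j).neg
    exact cosB_limit Rn (lvS (j+1)) (lvS j) (lbS j) (LL j) (-DL j) hRnpos ((hedge (j+1)).1)
      ((hedge j).1) (hlbpos j) hRninv ((hedge (j+1)).2.1) ((hedge j).2.1) hd' (hlbT j)
      (hLLpos j)
  have hSQpos : ∀ j n, 0 < SQ j n := by
    intro j n
    rw [hSQ]
    apply Real.sqrt_pos.mpr
    obtain ⟨ha, hb⟩ := hXVmem j n
    nlinarith
  have hgtEqA : ∀ n (j : ZMod s), hgt (dvj s R ρ I (w n) (c n) (j+1))
      (dvj s R ρ I (w n) (c n) j) (angAtV s R ρ I J (w n) (c n) j) = NA j n / SQ j n := by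
    intro n j
    have hmem := hXVmem j n
    rw [hNA, hSQ, hXV, hdS, hdS, hlvS, hlvS, hlbS]
    rw [hXV, hlvS, hlvS, hlbS] at hmem
    show (dvj s R ρ I (w n) (c n) (j+1) - dvj s R ρ I (w n) (c n) j *
      Real.cos (angAtV s R ρ I J (w n) (c n) j)) /
      Real.sin (angAtV s R ρ I J (w n) (c n) j) = _
    rw [show angAtV s R ρ I J (w n) (c n) j = Real.arccos
        ((lv s R ρ I (w n) (c n) j^2 + lv s R ρ I (w n) (c n) (j+1)^2
          - lb s ρ J (c n) j^2)/(2*lv s R ρ I (w n) (c n) j*lv s R ρ I (w n) (c n) (j+1)))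
      from rfl, Real.sin_arccos, Real.cos_arccos hmem.1.le hmem.2.le]
  have hgtEqB : ∀ n (j : ZMod s), hgt (dvj s R ρ I (w n) (c n) j)
      (dvj s R ρ I (w n) (c n) (j+1)) (angAtV s R ρ I J (w n) (c n) j) = NB j n / SQ j n := by
    intro n j
    have hmem := hXVmem j n
    rw [hNB, hSQ, hXV, hdS, hdS, hlvS, hlvS, hlbS]
    rw [hXV, hlvS, hlvS, hlbS] at hmem
    show (dvj s R ρ I (w n) (c n) j - dvj s R ρ I (w n) (c n) (j+1) *
      Real.cos (angAtV s R ρ I J (w n) (c n) j)) /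
      Real.sin (angAtV s R ρ I J (w n) (c n) j) = _
    rw [show angAtV s R ρ I J (w n) (c n) j = Real.arccos
        ((lv s R ρ I (w n) (c n) j^2 + lv s R ρ I (w n) (c n) (j+1)^2
          - lb s ρ J (c n) j^2)/(2*lv s R ρ I (w n) (c n) j*lv s R ρ I (w n) (c n) (j+1)))
      from rfl, Real.sin_arccos, Real.cos_arccos hmem.1.le hmem.2.le]
  have hdel' : ∀ n (j : ZMod s), 0 ≤ NB j n / SQ j n + NA (j+1) n / SQ (j+1) n := by
    intro n j
    have h := hdel n (j+1)
    rw [show j+1-1 = j from add_sub_cancel_right j 1] at h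
    rw [hgtEqB n j, hgtEqA n (j+1)] at h
    exact h
  have hstarn : ∀ n (j : ZMod s),
      0 ≤ (Rn n * NB j n) * (Rn n * SQ (j+1) n) + (Rn n * NA (j+1) n) * (Rn n * SQ j n) := by
    intro n j
    have h := hdel' n j
    have hs1 := hSQpos j n
    have hs2 := hSQpos (j+1) n
    rw [div_add_div _ _ hs1.ne' hs2.ne'] at h
    have h2 : 0 ≤ NB j n * SQ (j+1) n + SQ j n * NA (j+1) n := by
      by_contra hcon
      push_neg at hcon
      have := div_neg_of_neg_of_pos hcon (mul_pos hs1 hs2)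
      linarith
    nlinarith [mul_nonneg (mul_nonneg (sq_nonneg (Rn n)) h2) (le_of_lt (hRnpos 0)),
      mul_nonneg (sq_nonneg (Rn n)) h2]
  have hstar : ∀ j : ZMod s, 0 ≤ MB j * SL (j+1) + MA (j+1) * SL j := by
    intro j
    have hT : Tendsto (fun n => (Rn n * NB j n) * (Rn n * SQ (j+1) n)
        + (Rn n * NA (j+1) n) * (Rn n * SQ j n)) atTop
        (𝓝 (MB j * SL (j+1) + MA (j+1) * SL j)) :=
      (((htri j).2.2).mul ((htri (j+1)).1)).add (((htri (j+1)).2.1).mul ((htri j).1))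
    exact ge_of_tendsto' hT (fun n => hstarn n j)
  have hDle : ∀ j, DL j ≤ LL j ∧ -LL j ≤ DL j := by
    intro j
    constructor
    · apply le_of_tendsto_of_tendsto' (hdiff j) (hlbT j)
      intro n
      have h1 : lvS j n < lbS j n + lvS (j+1) n := by
        rw [hlvS, hlvS, hlbS]; exact (hnd n j).1
      linarith
    · have hd' : Tendsto (fun n => lvS (j+1) n - lvS j n) atTop (𝓝 (-DL j)) := by
        simpa [neg_sub] using (hdiff j).neg
      have h := le_of_tendsto_of_tendsto' hd' (hlbT j) (fun n => by
        have h1 : lvS (j+1) n < lvS j n + lbS j n := by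
          rw [hlvS, hlvS, hlbS]; exact (hnd n j).2.2
        linarith)
      linarith
  have hMAneg : ∀ j, DL j = LL j → MA j < 0 := by
    intro j hDel
    have hDel' : I j * AL j - I (j+1) * AL (j+1) = LL j := by rw [← hDL]; exact hDel
    have h := alg_neg (hALpos j) (hALpos (j+1)) (hI j) (hI (j+1)) (hJ j) (hLLpos j)
      (hLL2 j) hDel'
    have h' : CL (j+1) - CL j < 0 := by rw [hCL, hCL]; exact h
    have h2 : LL j^2 - DL j^2 = 0 := by rw [hDel]; ring
    rw [hMA]
    linarith
  have hMBneg : ∀ j, DL j = -LL j → MB j < 0 := by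
    intro j hDel
    have hL2' : LL j^2 = AL (j+1)^2 + AL j^2 + 2*J j*AL (j+1)*AL j := by
      linear_combination hLL2 j
    have h0 : I j * AL j - I (j+1) * AL (j+1) = -LL j := by rw [← hDL]; exact hDel
    have hDel' : I (j+1) * AL (j+1) - I j * AL j = LL j := by linarith
    have h := alg_neg (hALpos (j+1)) (hALpos j) (hI (j+1)) (hI j) (hJ j) (hLLpos j)
      hL2' hDel'
    have h' : CL j - CL (j+1) < 0 := by rw [hCL, hCL]; exact h
    have h2 : LL j^2 - DL j^2 = 0 := by rw [hDel]; ring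
    rw [hMB]
    linarith
  have hcontra : ∀ j : ZMod s, MB j < 0 → MA (j+1) < 0 → False := by
    intro j hB hA
    have h1 : ∀ᶠ n in atTop, Rn n * NB j n < 0 := ((htri j).2.2).eventually_lt_const hB
    have h2 : ∀ᶠ n in atTop, Rn n * NA (j+1) n < 0 :=
      ((htri (j+1)).2.1).eventually_lt_const hA
    obtain ⟨n, hn1, hn2⟩ := (h1.and h2).exists
    have hNBn : NB j n < 0 := by nlinarith [hRnpos n]
    have hNAn : NA (j+1) n < 0 := by nlinarith [hRnpos n]
    have h := hdel' n j
    have d1 := div_neg_of_neg_of_pos hNBn (hSQpos j n)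
    have d2 := div_neg_of_neg_of_pos hNAn (hSQpos (j+1) n)
    linarith
  have hSLnn : ∀ j, 0 ≤ SL j := fun j => by rw [hSL]; exact Real.sqrt_nonneg _
  have hSLzero : ∀ j, SL j = 0 → DL j = LL j ∨ DL j = -LL j := by
    intro j h
    rw [hSL] at h
    have h1 : LL j^2 - DL j^2 ≤ 0 := by
      by_contra hcon
      push_neg at hcon
      have hp := Real.sqrt_pos.mpr hcon
      rw [h] at hp
      exact lt_irrefl 0 hp
    obtain ⟨ha, hb⟩ := hDle j
    have h2 : DL j^2 ≤ LL j^2 := by nlinarith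
    have h4 : (DL j - LL j)*(DL j + LL j) = 0 := by nlinarith
    rcases mul_eq_zero.mp h4 with h5 | h5
    · left; linarith
    · right; linarith
  have hstepA : ∀ i : ZMod s, DL i = LL i → DL (i-1) = LL (i-1) := by
    intro i hDi
    have hSLi : SL i = 0 := by
      rw [hSL, hDi]
      simp
    have hMAi : MA i < 0 := hMAneg i hDi
    have hs := hstar (i-1)
    rw [sub_add_cancel] at hs
    rw [hSLi] at hs
    have hnn := hSLnn (i-1)
    have hSL1 : SL (i-1) = 0 := by nlinarith
    rcases hSLzero (i-1) hSL1 with h | h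
    · exact h
    · exfalso
      have hMBi : MB (i-1) < 0 := hMBneg (i-1) h
      have hMA' : MA ((i-1)+1) < 0 := by rw [sub_add_cancel]; exact hMAi
      exact hcontra (i-1) hMBi hMA'
  have hstepB : ∀ i : ZMod s, DL i = -LL i → DL (i+1) = -LL (i+1) := by
    intro i hDi
    have hSLi : SL i = 0 := by
      rw [hSL, hDi]
      simp
    have hMBi : MB i < 0 := hMBneg i hDi
    have hs := hstar i
    rw [hSLi] at hs
    have hnn := hSLnn (i+1)
    have hSL1 : SL (i+1) = 0 := by nlinarith
    rcases hSLzero (i+1) hSL1 with h | h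
    · exfalso
      exact hcontra i hMBi (hMAneg (i+1) h)
    · exact h
  have key : ∀ j, DL j^2 < LL j^2 := by
    by_contra hcon
    push_neg at hcon
    obtain ⟨j, hj⟩ := hcon
    have hDsum : ∑ i : ZMod s, DL i = 0 := by
      have h1 : ∑ i : ZMod s, DL i
          = ∑ i : ZMod s, (I i * AL i) - ∑ i : ZMod s, (I (i+1) * AL (i+1)) := by
        rw [← Finset.sum_sub_distrib]
        exact Finset.sum_congr rfl (fun i _ => hDL i)
      have h2 : ∑ i : ZMod s, (I (i+1) * AL (i+1)) = ∑ i : ZMod s, (I i * AL i) := by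
        simpa using Equiv.sum_comp (Equiv.addRight (1 : ZMod s)) (fun i => I i * AL i)
      rw [h1, h2, sub_self]
    have hLsum : 0 < ∑ i : ZMod s, LL i :=
      Finset.sum_pos (fun i _ => hLLpos i) Finset.univ_nonempty
    have heq : DL j = LL j ∨ DL j = -LL j := by
      obtain ⟨ha, hb⟩ := hDle j
      have h3 : DL j^2 = LL j^2 := le_antisymm (by nlinarith) hj
      have h4 : (DL j - LL j)*(DL j + LL j) = 0 := by nlinarith
      rcases mul_eq_zero.mp h4 with h5 | h5
      · left; linarith [hLLpos j]
      · right; linarith [hLLpos j]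
    rcases heq with hq | hq
    · have hall : ∀ k : ℕ, DL (j - (k : ZMod s)) = LL (j - (k : ZMod s)) := by
        intro k
        induction k with
        | zero => simpa using hq
        | succ m ih =>
          have h := hstepA (j - (m : ZMod s)) ih
          have hcast : j - ((m+1 : ℕ) : ZMod s) = j - (m : ZMod s) - 1 := by
            push_cast
            ring
          rw [hcast]
          exact h
      have hallZ : ∀ i : ZMod s, DL i = LL i := by
        intro i
        have h := hall ((j - i).val)
        rwa [ZMod.natCast_rightInverse (j - i), sub_sub_cancel] at h
      have hsum : ∑ i : ZMod s, DL i = ∑ i : ZMod s, LL i :=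
        Finset.sum_congr rfl (fun i _ => hallZ i)
      rw [hDsum] at hsum
      linarith
    · have hall : ∀ k : ℕ, DL (j + (k : ZMod s)) = -LL (j + (k : ZMod s)) := by
        intro k
        induction k with
        | zero => simpa using hq
        | succ m ih =>
          have h := hstepB (j + (m : ZMod s)) ih
          have hcast : j + ((m+1 : ℕ) : ZMod s) = j + (m : ZMod s) + 1 := by
            push_cast
            ring
          rw [hcast]
          exact h
      have hallZ : ∀ i : ZMod s, DL i = -LL i := by
        intro i
        have h := hall ((i - j).val)
        rwa [ZMod.natCast_rightInverse (i - j), add_sub_cancel] at h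
      have hsum : ∑ i : ZMod s, DL i = ∑ i : ZMod s, (-LL i) :=
        Finset.sum_congr rfl (fun i _ => hallZ i)
      rw [hDsum, Finset.sum_neg_distrib] at hsum
      linarith
  intro j
  have hb1 : -LL j < DL j ∧ DL j < LL j := by
    have hk := key j
    have hL := hLLpos j
    constructor <;> nlinarith
  constructor
  · refine ⟨Real.arccos (DL j / LL j), Set.mem_Ioo.mpr ⟨?_, ?_⟩, ?_⟩
    · exact Real.arccos_pos.mpr (by rw [div_lt_one (hLLpos j)]; exact hb1.2)
    · exact my_arccos_lt_pi (by rw [lt_div_iff₀ (hLLpos j)]; nlinarith [hb1.1])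
    · have h := (Real.continuous_arccos.tendsto _).comp (hcosJ j)
      apply h.congr
      intro n
      show Real.arccos ((lvS j n^2 + lbS j n^2 - lvS (j+1) n^2)/(2*lvS j n*lbS j n)) = _
      rw [hlvS, hlvS, hlbS]
      rfl
  · refine ⟨Real.arccos (-DL j / LL j), Set.mem_Ioo.mpr ⟨?_, ?_⟩, ?_⟩
    · exact Real.arccos_pos.mpr (by rw [div_lt_one (hLLpos j)]; nlinarith [hb1.1])
    · exact my_arccos_lt_pi (by rw [lt_div_iff₀ (hLLpos j)]; nlinarith [hb1.2])
    · have h := (Real.continuous_arccos.tendsto _).comp (hcosJ1 j)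
      apply h.congr
      intro n
      show Real.arccos ((lvS (j+1) n^2 + lbS j n^2 - lvS j n^2)/(2*lvS (j+1) n*lbS j n)) = _
      rw [hlvS, hlvS, hlbS]
      rfl
end

section
/- Let (u_n) be a sequence in ℝ³ such that every u_n is nondegenerate, u_{i,n} → +∞, the sequences (u_{j,n}) and (u_{k,n}) converge, and θ_ki^j(u_n) → β with β ∈ (0, π). Then θ_jk^i(u_n) · u_{i,n} → 0. -/
open Real Filter Topology

section Aux

private lemma elen_pos' {I ra rb x y : ℝ} (hra : 0 < ra) (hrb : 0 < rb) (hI : 0 < I) :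
    0 < elen I ra rb x y := by
  unfold elen
  apply Real.sqrt_pos.mpr
  have h1 : 0 < Real.exp x * ra := by positivity
  have h2 : 0 < Real.exp y * rb := by positivity
  positivity

private lemma left_le_elen' {I ra rb x y : ℝ} (hra : 0 < ra) (hrb : 0 < rb) (hI : 0 < I) :
    Real.exp x * ra ≤ elen I ra rb x y := by
  unfold elen
  have h1 : 0 < Real.exp x * ra := by positivity
  have h2 : 0 < Real.exp y * rb := by positivity
  calc Real.exp x * ra = Real.sqrt ((Real.exp x * ra) ^ 2) := by
        rw [Real.sqrt_sq h1.le]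
    _ ≤ _ := Real.sqrt_le_sqrt (by nlinarith [mul_pos hI (mul_pos h1 h2)])

private lemma right_le_elen' {I ra rb x y : ℝ} (hra : 0 < ra) (hrb : 0 < rb) (hI : 0 < I) :
    Real.exp y * rb ≤ elen I ra rb x y := by
  unfold elen
  have h1 : 0 < Real.exp x * ra := by positivity
  have h2 : 0 < Real.exp y * rb := by positivity
  calc Real.exp y * rb = Real.sqrt ((Real.exp y * rb) ^ 2) := by
        rw [Real.sqrt_sq h2.le]
    _ ≤ _ := Real.sqrt_le_sqrt (by nlinarith [mul_pos hI (mul_pos h1 h2)])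

private lemma elen_tendsto {I ra rb : ℝ} {x y : ℕ → ℝ} {x0 y0 : ℝ}
    (hx : Tendsto x atTop (𝓝 x0)) (hy : Tendsto y atTop (𝓝 y0)) :
    Tendsto (fun n => elen I ra rb (x n) (y n)) atTop (𝓝 (elen I ra rb x0 y0)) := by
  unfold elen
  apply Filter.Tendsto.sqrt
  have ha : Tendsto (fun n => Real.exp (x n) * ra) atTop (𝓝 (Real.exp x0 * ra)) :=
    (Real.continuous_exp.continuousAt.tendsto.comp hx).mul_const ra
  have hb : Tendsto (fun n => Real.exp (y n) * rb) atTop (𝓝 (Real.exp y0 * rb)) :=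
    (Real.continuous_exp.continuousAt.tendsto.comp hy).mul_const rb
  exact ((ha.pow 2).add (hb.pow 2)).add ((tendsto_const_nhds.mul ha).mul hb)

end Aux

/-- If `u_i → +∞`, `u_j, u_k` converge and `θ_ki^j → β ∈ (0, π)`, then
`θ_jk^i(u_n) · u_i,n → 0`. -/
theorem angle_times_factor_tendsto_zero (ri rj rk Iij Ijk Iki : ℝ) (hri : 0 < ri) (hrj : 0 < rj) (hrk : 0 < rk)
    (hIij : 1 < Iij) (hIjk : 1 < Ijk) (hIki : 1 < Iki)
    (a b c : ℕ → ℝ) (aj ak β : ℝ)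
    (hnd : ∀ n, NondegT ri rj rk Iij Ijk Iki (a n) (b n) (c n))
    (ha : Tendsto a atTop atTop) (hb : Tendsto b atTop (𝓝 aj))
    (hc : Tendsto c atTop (𝓝 ak))
    (hβ : β ∈ Set.Ioo (0:ℝ) π)
    (hθj : Tendsto (fun n => ThJ ri rj rk Iij Ijk Iki (a n) (b n) (c n)) atTop (𝓝 β)) :
    Tendsto (fun n => ThI ri rj rk Iij Ijk Iki (a n) (b n) (c n) * a n) atTop (𝓝 0) := by
  set A : ℕ → ℝ := fun n => Lij ri rj rk Iij Ijk Iki (a n) (b n) (c n) with hAdef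
  set B : ℕ → ℝ := fun n => Lki ri rj rk Iij Ijk Iki (a n) (b n) (c n) with hBdef
  set C : ℕ → ℝ := fun n => Ljk ri rj rk Iij Ijk Iki (a n) (b n) (c n) with hCdef
  set t : ℕ → ℝ := fun n => Real.exp (a n) * ri with htdef
  have hIij0 : (0:ℝ) < Iij := lt_trans one_pos hIij
  have hIjk0 : (0:ℝ) < Ijk := lt_trans one_pos hIjk
  have hIki0 : (0:ℝ) < Iki := lt_trans one_pos hIki
  have hApos : ∀ n, 0 < A n := fun n => elen_pos' hri hrj hIij0
  have hBpos : ∀ n, 0 < B n := fun n => elen_pos' hrk hri hIki0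
  have hCpos : ∀ n, 0 < C n := fun n => elen_pos' hrj hrk hIjk0
  have htpos : ∀ n, 0 < t n := fun n => by positivity
  have htA : ∀ n, t n ≤ A n := fun n => left_le_elen' hri hrj hIij0
  have htB : ∀ n, t n ≤ B n := fun n => right_le_elen' hrk hri hIki0
  set x : ℕ → ℝ := fun n => (A n ^ 2 + B n ^ 2 - C n ^ 2) / (2 * A n * B n) with hxdef
  have hThI : ∀ n, ThI ri rj rk Iij Ijk Iki (a n) (b n) (c n) = Real.arccos (x n) :=
    fun n => rfl
  have hnd' : ∀ n, A n < C n + B n ∧ C n < B n + A n ∧ B n < A n + C n := hnd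
  -- x n ≤ 1
  have hxle1 : ∀ n, x n ≤ 1 := by
    intro n
    obtain ⟨h1, h2, h3⟩ := hnd' n
    rw [hxdef, div_le_one (by nlinarith [hApos n, hBpos n])]
    nlinarith [hCpos n]
  -- key lower bound
  have hkey : ∀ n, 1 - C n ^ 2 / (2 * t n ^ 2) ≤ x n := by
    intro n
    have hab : 0 < 2 * A n * B n := by nlinarith [hApos n, hBpos n]
    have ht2 : 0 < 2 * t n ^ 2 := by nlinarith [htpos n]
    have h1 : 1 - C n ^ 2 / (2 * A n * B n) ≤ x n := by
      rw [hxdef, sub_le_iff_le_add, ← add_div, le_div_iff₀ hab]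
      nlinarith [sq_nonneg (A n - B n)]
    have h2 : C n ^ 2 / (2 * A n * B n) ≤ C n ^ 2 / (2 * t n ^ 2) := by
      apply div_le_div_of_nonneg_left (by positivity) ht2
      nlinarith [htA n, htB n, htpos n]
    linarith
  -- sin bound : sin (arccos (x n)) ≤ C n / t n
  have hsinb : ∀ n, Real.sin (Real.arccos (x n)) ≤ C n / t n := by
    intro n
    rw [Real.sin_arccos]
    have h1 : 1 - x n ^ 2 ≤ (C n / t n) ^ 2 := by
      have hx1 := hxle1 n
      have hk := hkey n
      have : (C n / t n) ^ 2 = C n ^ 2 / t n ^ 2 := by rw [div_pow]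
      rw [this]
      have ht2 : (0:ℝ) < t n ^ 2 := by positivity
      have : C n ^ 2 / (2 * t n ^ 2) = C n ^ 2 / t n ^ 2 / 2 := by ring
      rw [this] at hk
      nlinarith [sq_nonneg (x n)]
    calc Real.sqrt (1 - x n ^ 2) ≤ Real.sqrt ((C n / t n) ^ 2) := Real.sqrt_le_sqrt h1
      _ = C n / t n := Real.sqrt_sq (le_of_lt (div_pos (hCpos n) (htpos n)))
  -- limits
  have hCt : Tendsto C atTop (𝓝 (elen Ijk rj rk aj ak)) := elen_tendsto hb hc
  have htTop : Tendsto t atTop atTop :=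
    Tendsto.atTop_mul_const hri (Real.tendsto_exp_atTop.comp ha)
  have hCt2 : Tendsto (fun n => C n ^ 2 / (2 * t n ^ 2)) atTop (𝓝 0) := by
    have h1 : Tendsto (fun n => (2 * t n ^ 2)⁻¹) atTop (𝓝 0) := by
      apply Tendsto.inv_tendsto_atTop
      have h2 : Tendsto (fun n => 2 * t n ^ 2) atTop atTop := by
        simpa [sq, mul_assoc] using (htTop.atTop_mul_atTop₀ htTop).const_mul_atTop two_pos
      exact h2
    have := (hCt.pow 2).mul h1
    simpa [div_eq_mul_inv] using this
  have hx1 : Tendsto x atTop (𝓝 1) := by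
    apply tendsto_of_tendsto_of_tendsto_of_le_of_le
      (g := fun n => 1 - C n ^ 2 / (2 * t n ^ 2)) (h := fun _ => (1:ℝ))
    · simpa using (tendsto_const_nhds (x := (1:ℝ))).sub hCt2
    · exact tendsto_const_nhds
    · exact hkey
    · exact hxle1
  have hThI0 : Tendsto (fun n => Real.arccos (x n)) atTop (𝓝 0) := by
    have := (Real.continuous_arccos.continuousAt (x := (1:ℝ))).tendsto.comp hx1
    simpa [Real.arccos_one, Function.comp_def] using this
  -- eventual bounds
  have hev1 : ∀ᶠ n in atTop, 1 ≤ a n := ha.eventually_ge_atTop 1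
  have hev2 : ∀ᶠ n in atTop, Real.arccos (x n) < π / 2 :=
    hThI0.eventually_lt_const (by positivity)
  -- RHS sequence
  set R : ℕ → ℝ := fun n => π / (2 * ri) * (C n * (a n * Real.exp (-a n))) with hRdef
  have hR : Tendsto R atTop (𝓝 0) := by
    have h1 : Tendsto (fun y : ℝ => y * Real.exp (-y)) atTop (𝓝 0) := by
      simpa using tendsto_pow_mul_exp_neg_atTop_nhds_zero 1
    have h2 : Tendsto (fun n => a n * Real.exp (-a n)) atTop (𝓝 0) := h1.comp ha
    have := (tendsto_const_nhds (x := π / (2 * ri))).mul (hCt.mul h2)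
    simpa using this
  -- squeeze
  apply tendsto_of_tendsto_of_tendsto_of_le_of_le' tendsto_const_nhds hR
  · filter_upwards [hev1] with n hn
    simp only [hThI]
    exact mul_nonneg (Real.arccos_nonneg _) (by linarith)
  · filter_upwards [hev1, hev2] with n hn1 hn2
    simp only [hThI, hRdef]
    have hθ0 : 0 ≤ Real.arccos (x n) := Real.arccos_nonneg _
    have hms := Real.mul_le_sin hθ0 hn2.le
    have hθle : Real.arccos (x n) ≤ π / 2 * Real.sin (Real.arccos (x n)) := by
      have hπ : (0:ℝ) < π := Real.pi_pos
      rw [div_mul_eq_mul_div, le_div_iff₀ two_pos]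
      calc Real.arccos (x n) * 2 = π * (2 / π * Real.arccos (x n)) := by
            field_simp
        _ ≤ π * Real.sin (Real.arccos (x n)) := by
            apply mul_le_mul_of_nonneg_left hms hπ.le
    have hchain : Real.arccos (x n) ≤ π / 2 * (C n / t n) := by
      calc Real.arccos (x n) ≤ π / 2 * Real.sin (Real.arccos (x n)) := hθle
        _ ≤ π / 2 * (C n / t n) := by
            apply mul_le_mul_of_nonneg_left (hsinb n) (by positivity)
    have han : 0 ≤ a n := by linarith
    calc Real.arccos (x n) * a n ≤ π / 2 * (C n / t n) * a n :=
          mul_le_mul_of_nonneg_right hchain han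
      _ = π / (2 * ri) * (C n * (a n * Real.exp (-a n))) := by
          rw [htdef]
          rw [Real.exp_neg]
          have he : Real.exp (a n) ≠ 0 := (Real.exp_pos _).ne'
          field_simp
end
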